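/- arXiv:2402.04875 — 10 statements merged into one kernel-verified Lean document; each statement's English description precedes it below -/
import Mathlib

section
/- Fix n, m, k ≥ 1 and T ≥ 1. Let σ : ℝ → ℝ be a continuously differentiable bijection, applied coordinatewise to vectors; let A, B ∈ ℝ^{m×k}; and let ψ, φ : ℝ^n → ℝ^k be continuously differentiable. For t ≥ 1 define h_t, f_t : (ℝ^n)^t → ℝ^m by h_t(x_{≤t}) = σ(A Σ_{j=1}^t ψ(x_j)) and f_t(x_{≤t}) = σ(B Σ_{j=1}^t φ(x_j)). Suppose S_T ⊆ ([0,1]^n)^T is a nonempty regular closed set whose projection onto each token coordinate j ∈ {1,…,T} equals [0,1]^n, and suppose h_T(x_{≤T}) = f_T(x_{≤T}) for Lebesgue-almost every x_{≤T} ∈ S_T. Then A ψ(x) = B φ(x) for every x ∈ [0,1]^n (linear identification), and consequently h_t(x_{≤t}) = f_t(x_{≤t}) for every t ≥ 1 and every x_{≤t} ∈ ([0,1]^n)^t, i.e., the learned deep set achieves length and compositional generalization. -/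
open MeasureTheory

/-- **Theorem 1 (deep sets, single-layer-perceptron output).**
Tokens live in `ℝⁿ` (as `Fin n → ℝ`), sequences of length `t` are maps `Fin t → (Fin n → ℝ)`.
The learned model is `h_t(x) = σ(A ∑_j ψ(x_j))` and the labeling function is
`f_t(x) = σ(B ∑_j φ(x_j))`, with `σ` a `C¹` bijection applied coordinatewise.
If the training support `S ⊆ ([0,1]ⁿ)^T` is nonempty, regular closed, has full per-token
projections, and `h_T = f_T` Lebesgue-a.e. on `S`, then `A ψ(x) = B φ(x)` on `[0,1]ⁿ`
(linear identification) and `h_t = f_t` on `([0,1]ⁿ)^t` for every length `t ≥ 1`. -/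
theorem stmt_1 {n m k T : ℕ} (hn : 1 ≤ n) (hm : 1 ≤ m) (hk : 1 ≤ k) (hT : 1 ≤ T)
    (σ : ℝ → ℝ) (hσdiff : ContDiff ℝ 1 σ) (hσbij : Function.Bijective σ)
    (A B : Matrix (Fin m) (Fin k) ℝ)
    (ψ φ : (Fin n → ℝ) → (Fin k → ℝ)) (hψ : ContDiff ℝ 1 ψ) (hφ : ContDiff ℝ 1 φ)
    (S : Set (Fin T → Fin n → ℝ)) (hSne : S.Nonempty)
    (hSreg : S = closure (interior S))
    (hScube : S ⊆ Set.Icc 0 1)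
    (hSproj : ∀ j : Fin T, (fun x : Fin T → Fin n → ℝ => x j) '' S =
      Set.Icc (0 : Fin n → ℝ) 1)
    (hae : volume {x | x ∈ S ∧
      (fun i => σ (A.mulVec (∑ j, ψ (x j)) i)) ≠ (fun i => σ (B.mulVec (∑ j, φ (x j)) i))} = 0) :
    (∀ x ∈ Set.Icc (0 : Fin n → ℝ) 1, A.mulVec (ψ x) = B.mulVec (φ x)) ∧
    (∀ t : ℕ, 1 ≤ t → ∀ x : Fin t → Fin n → ℝ,
      (∀ j, x j ∈ Set.Icc (0 : Fin n → ℝ) 1) →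
      (fun i => σ (A.mulVec (∑ j, ψ (x j)) i)) = (fun i => σ (B.mulVec (∑ j, φ (x j)) i))) := by
  classical
  set g : (Fin n → ℝ) → (Fin m → ℝ) := fun x => A.mulVec (ψ x) - B.mulVec (φ x) with hgdef
  have hgC : ContDiff ℝ 1 g := by
    exact ((A.mulVecLin.toContinuousLinearMap.contDiff).comp hψ).sub
      ((B.mulVecLin.toContinuousLinearMap.contDiff).comp hφ)
  -- σ-equality of vectors reduces to equality of arguments
  have hσeq : ∀ a b : Fin m → ℝ,
      ((fun i => σ (a i)) = fun i => σ (b i)) ↔ a = b := by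
    intro a b
    constructor
    · intro h
      funext i
      exact hσbij.injective (congrFun h i)
    · intro h; rw [h]
  -- mulVec commutes with sums
  have hsumA : ∀ {t : ℕ} (x : Fin t → Fin n → ℝ),
      A.mulVec (∑ j, ψ (x j)) = ∑ j, A.mulVec (ψ (x j)) := by
    intro t x
    exact map_sum A.mulVecLin (fun j => ψ (x j)) Finset.univ
  have hsumB : ∀ {t : ℕ} (x : Fin t → Fin n → ℝ),
      B.mulVec (∑ j, φ (x j)) = ∑ j, B.mulVec (φ (x j)) := by
    intro t x
    exact map_sum B.mulVecLin (fun j => φ (x j)) Finset.univ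
  set F : (Fin T → Fin n → ℝ) → (Fin m → ℝ) := fun x => ∑ j, g (x j) with hFdef
  have hFC : Continuous F := by
    apply continuous_finset_sum
    intro j _
    exact hgC.continuous.comp (continuous_apply j)
  have hFiff : ∀ x : Fin T → Fin n → ℝ,
      F x = 0 ↔ (fun i => σ (A.mulVec (∑ j, ψ (x j)) i)) = (fun i => σ (B.mulVec (∑ j, φ (x j)) i)) := by
    intro x
    have h1 : F x = A.mulVec (∑ j, ψ (x j)) - B.mulVec (∑ j, φ (x j)) := by
      show (∑ j, g (x j)) = _
      rw [hsumA, hsumB, ← Finset.sum_sub_distrib]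
    rw [hσeq, h1, sub_eq_zero]
  have hae' : volume {x : Fin T → Fin n → ℝ | x ∈ S ∧ F x ≠ 0} = 0 := by
    have hseteq : {x : Fin T → Fin n → ℝ | x ∈ S ∧ F x ≠ 0} = {x | x ∈ S ∧
        (fun i => σ (A.mulVec (∑ j, ψ (x j)) i)) ≠ (fun i => σ (B.mulVec (∑ j, φ (x j)) i))} := by
      ext x
      simp only [Set.mem_setOf_eq]
      exact and_congr_right fun _ => not_congr (hFiff x)
    rw [hseteq]
    exact hae
  -- F = 0 on all of S
  have hFzero : ∀ x ∈ S, F x = 0 := by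
    have hint : interior S ⊆ {x | F x = 0} := by
      intro u hu
      by_contra hne
      have hopen : IsOpen (interior S ∩ {x | F x ≠ 0}) :=
        isOpen_interior.inter (isClosed_eq hFC continuous_const).isOpen_compl
      have hpos : 0 < volume (interior S ∩ {x | F x ≠ 0}) :=
        hopen.measure_pos volume ⟨u, hu, hne⟩
      have hsub : interior S ∩ {x | F x ≠ 0} ⊆ {x | x ∈ S ∧ F x ≠ 0} := by
        rintro x ⟨hx1, hx2⟩
        exact ⟨interior_subset hx1, hx2⟩
      exact hpos.ne' (measure_mono_null hsub hae')
    intro x hx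
    rw [hSreg] at hx
    exact closure_minimal hint (isClosed_eq hFC continuous_const) hx
  -- derivative of g vanishes on the cube
  have hderiv : ∀ y ∈ Set.Icc (0 : Fin n → ℝ) 1, fderiv ℝ g y = 0 := by
    have hclosed : IsClosed {y : Fin n → ℝ | fderiv ℝ g y = 0} :=
      isClosed_eq (hgC.continuous_fderiv one_ne_zero) continuous_const
    have hj0 : (0 : ℕ) < T := hT
    set j0 : Fin T := ⟨0, hj0⟩
    have hsub : (fun x : Fin T → Fin n → ℝ => x j0) '' interior S ⊆
        {y : Fin n → ℝ | fderiv ℝ g y = 0} := by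
      rintro _ ⟨u, hu, rfl⟩
      have hcont : Continuous (fun z : Fin n → ℝ => Function.update u j0 z) :=
        continuous_const.update j0 continuous_id
      have hmem : ∀ᶠ z in nhds (u j0), Function.update u j0 z ∈ interior S := by
        have h1 : interior S ∈ nhds (Function.update u j0 (u j0)) := by
          rw [Function.update_eq_self]
          exact isOpen_interior.mem_nhds hu
        exact hcont.continuousAt.preimage_mem_nhds h1
      have hconst : g =ᶠ[nhds (u j0)]
          (fun _ => -∑ i ∈ Finset.univ \ {j0}, g (u i)) := by
        filter_upwards [hmem] with z hz
        have h0 : F (Function.update u j0 z) = 0 :=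
          hFzero _ (by rw [hSreg]; exact subset_closure hz)
        have h1 : F (Function.update u j0 z)
            = g z + ∑ i ∈ Finset.univ \ {j0}, g (u i) := by
          show (∑ i, g (Function.update u j0 z i)) = _
          have : ∀ i, g (Function.update u j0 z i)
              = Function.update (fun i => g (u i)) j0 (g z) i := by
            intro i
            exact Function.apply_update (fun _ v => g v) u j0 z i
          rw [Finset.sum_congr rfl fun i _ => this i]
          exact Finset.sum_update_of_mem (Finset.mem_univ j0) _ _
        rw [h1] at h0
        exact eq_neg_of_add_eq_zero_left h0
      have := hconst.fderiv_eq (𝕜 := ℝ)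
      simp only [Set.mem_setOf_eq]
      rw [this]
      exact fderiv_const_apply _
    intro y hy
    have hyim : y ∈ (fun x : Fin T → Fin n → ℝ => x j0) '' S := by
      rw [hSproj j0]; exact hy
    obtain ⟨x, hxS, rfl⟩ := hyim
    rw [hSreg] at hxS
    have : x j0 ∈ closure ((fun x : Fin T → Fin n → ℝ => x j0) '' interior S) :=
      image_closure_subset_closure_image (continuous_apply j0) ⟨x, hxS, rfl⟩
    exact (hclosed.closure_subset_iff.mpr hsub) this
  -- g is constant on the cube
  have hconst : ∀ y ∈ Set.Icc (0 : Fin n → ℝ) 1, ∀ z ∈ Set.Icc (0 : Fin n → ℝ) 1,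
      g y = g z := by
    intro y hy z hz
    have hd : ∀ w ∈ Set.Icc (0 : Fin n → ℝ) 1,
        HasFDerivWithinAt g (0 : (Fin n → ℝ) →L[ℝ] (Fin m → ℝ)) (Set.Icc 0 1) w := by
      intro w hw
      have h1 : HasFDerivAt g (fderiv ℝ g w) w :=
        (hgC.differentiable one_ne_zero w).hasFDerivAt
      rw [hderiv w hw] at h1
      exact h1.hasFDerivWithinAt
    have := Convex.norm_image_sub_le_of_norm_hasFDerivWithin_le
      (f' := fun _ => (0 : (Fin n → ℝ) →L[ℝ] (Fin m → ℝ))) (C := 0) hd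
      (fun w _ => by simp) (convex_Icc _ _) hz hy
    have h2 : g y - g z = 0 := by simpa using this
    exact sub_eq_zero.mp h2
  -- the constant value is 0
  have hg0 : ∀ y ∈ Set.Icc (0 : Fin n → ℝ) 1, g y = 0 := by
    obtain ⟨x0, hx0⟩ := hSne
    have hx0c : ∀ j, x0 j ∈ Set.Icc (0 : Fin n → ℝ) 1 := by
      intro j
      have := hScube hx0
      exact ⟨this.1 j, this.2 j⟩
    intro y hy
    have hFx0 : F x0 = 0 := hFzero x0 hx0
    have heach : ∀ j : Fin T, g (x0 j) = g y := fun j => hconst _ (hx0c j) _ hy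
    have : F x0 = T • g y := by
      show (∑ j, g (x0 j)) = T • g y
      rw [Finset.sum_congr rfl fun j _ => heach j]
      simp
    rw [hFx0] at this
    have hT0 : (T : ℝ) ≠ 0 := Nat.cast_ne_zero.mpr (by omega)
    have h2 : (T : ℝ) • g y = 0 := by
      rw [Nat.cast_smul_eq_nsmul]
      exact this.symm
    rcases smul_eq_zero.mp h2 with h | h
    · exact absurd h hT0
    · exact h
  constructor
  · intro x hx
    have := hg0 x hx
    rwa [hgdef, sub_eq_zero] at this
  · intro t ht x hx
    rw [hσeq, hsumA, hsumB]
    apply Finset.sum_congr rfl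
    intro j _
    have := hg0 (x j) (hx j)
    rwa [hgdef, sub_eq_zero] at this
end

section
/- Fix n, m ≥ 1 and a token-support set D ⊆ ℝ^n. Let ω, ρ : ℝ^m → ℝ^m be C¹-diffeomorphisms and let ψ, φ : ℝ^n → ℝ^m be continuous. For t ≥ 1 define h_t(x_{≤t}) = ω(Σ_{j=1}^t ψ(x_j)) and f_t(x_{≤t}) = ρ(Σ_{j=1}^t φ(x_j)). Suppose (i) h_1(x) = f_1(x) for every x ∈ D; (ii) h_2(x₁, x₂) = f_2(x₁, x₂) for every (x₁, x₂) ∈ D × D; and (iii) {(φ(x₁), φ(x₂)) : x₁, x₂ ∈ D} = ℝ^m × ℝ^m. Then the map a := ω^{-1} ∘ ρ is linear: there is an invertible matrix A ∈ ℝ^{m×m} with ψ(x) = A φ(x) for every x ∈ D and ω(z) = ρ(A^{-1} z) for every z ∈ ℝ^m; consequently h_t(x_{≤t}) = f_t(x_{≤t}) for every t ≥ 1 and every x_{≤t} ∈ D^t (length and compositional generalization). -/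
/-- **Theorem 2 (deep sets, `C¹`-diffeomorphism output).**
The learned deep set is `h_t(x) = ω(∑_j ψ(x_j))` and the labeling function is
`f_t(x) = ρ(∑_j φ(x_j))`, where `ω, ρ : ℝᵐ → ℝᵐ` are `C¹`-diffeomorphisms and `ψ, φ` are
continuous token embeddings. If `h₁ = f₁` on the token support `D`, `h₂ = f₂` on `D × D`, and
`{(φ(x₁), φ(x₂)) : x₁, x₂ ∈ D} = ℝᵐ × ℝᵐ`, then `a = ω⁻¹ ∘ ρ` is linear: there is an invertible
matrix `A` with `ψ = A φ` on `D` and `ω(z) = ρ(A⁻¹ z)`, hence `h_t = f_t` on `D^t` for all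
`t ≥ 1`. -/
theorem stmt_2 {n m : ℕ} (hn : 1 ≤ n) (hm : 1 ≤ m)
    (D : Set (Fin n → ℝ))
    (ω ρ ωinv ρinv : (Fin m → ℝ) → (Fin m → ℝ))
    (hω : ContDiff ℝ 1 ω) (hωinv : ContDiff ℝ 1 ωinv)
    (hωli : Function.LeftInverse ωinv ω) (hωri : Function.RightInverse ωinv ω)
    (hρ : ContDiff ℝ 1 ρ) (hρinv : ContDiff ℝ 1 ρinv)
    (hρli : Function.LeftInverse ρinv ρ) (hρri : Function.RightInverse ρinv ρ)
    (ψ φ : (Fin n → ℝ) → (Fin m → ℝ)) (hψ : Continuous ψ) (hφ : Continuous φ)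
    (h1 : ∀ x ∈ D, ω (ψ x) = ρ (φ x))
    (h2 : ∀ x ∈ D, ∀ y ∈ D, ω (ψ x + ψ y) = ρ (φ x + φ y))
    (h3 : (fun p : (Fin n → ℝ) × (Fin n → ℝ) => (φ p.1, φ p.2)) '' (D ×ˢ D) = Set.univ) :
    ∃ A : Matrix (Fin m) (Fin m) ℝ, IsUnit A.det ∧
      (∀ x ∈ D, ψ x = A.mulVec (φ x)) ∧
      (∀ z : Fin m → ℝ, ω z = ρ (A⁻¹.mulVec z)) ∧
      (∀ t : ℕ, 1 ≤ t → ∀ x : Fin t → Fin n → ℝ, (∀ j, x j ∈ D) →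
        ω (∑ j, ψ (x j)) = ρ (∑ j, φ (x j))) := by
  classical
  -- a = ω⁻¹ ∘ ρ
  set a : (Fin m → ℝ) → (Fin m → ℝ) := fun z => ωinv (ρ z) with haa
  set b : (Fin m → ℝ) → (Fin m → ℝ) := fun z => ρinv (ω z) with hbb
  have hcont : Continuous a := hωinv.continuous.comp hρ.continuous
  have hψa : ∀ x ∈ D, ψ x = a (φ x) := by
    intro x hx
    have h := h1 x hx
    have : ωinv (ω (ψ x)) = ωinv (ρ (φ x)) := by rw [h]
    rwa [hωli (ψ x)] at this
  have hadd : ∀ u v, a (u + v) = a u + a v := by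
    intro u v
    have hu : (u, v) ∈ (fun p : (Fin n → ℝ) × (Fin n → ℝ) => (φ p.1, φ p.2)) '' (D ×ˢ D) := by
      rw [h3]; trivial
    obtain ⟨⟨x, y⟩, hmem, hxy⟩ := hu
    obtain ⟨hx, hy⟩ := hmem
    have hux : φ x = u := congrArg Prod.fst hxy
    have hvy : φ y = v := congrArg Prod.snd hxy
    have h2' := h2 x hx y hy
    have : ωinv (ω (ψ x + ψ y)) = ωinv (ρ (φ x + φ y)) := by rw [h2']
    rw [hωli] at this
    rw [← hux, ← hvy]
    calc a (φ x + φ y) = ψ x + ψ y := this.symm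
      _ = a (φ x) + a (φ y) := by rw [hψa x hx, hψa y hy]
  have h0 : a 0 = 0 := by
    have := hadd 0 0
    rw [add_zero] at this
    exact (left_eq_add.mp this)
  have hab : ∀ z, a (b z) = z := by
    intro z; show ωinv (ρ (ρinv (ω z))) = z
    rw [hρri (ω z), hωli z]
  have hba : ∀ z, b (a z) = z := by
    intro z; show ρinv (ω (ωinv (ρ z))) = z
    rw [hωri (ρ z), hρli z]
  -- linear map
  let F : (Fin m → ℝ) →+ (Fin m → ℝ) := ⟨⟨a, h0⟩, hadd⟩
  let L : (Fin m → ℝ) →L[ℝ] (Fin m → ℝ) := F.toRealLinearMap hcont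
  have hLa : ∀ v, L v = a v := fun v => rfl
  have hbij : Function.Bijective (L : (Fin m → ℝ) →ₗ[ℝ] (Fin m → ℝ)) := by
    constructor
    · intro u v huv
      have hav : a u = a v := huv
      have : b (a u) = b (a v) := by rw [hav]
      rwa [hba, hba] at this
    · intro v; exact ⟨b v, hab v⟩
  let e := LinearEquiv.ofBijective ((L : (Fin m → ℝ) →ₗ[ℝ] (Fin m → ℝ))) hbij
  have hdet : IsUnit (LinearMap.det ((L : (Fin m → ℝ) →ₗ[ℝ] (Fin m → ℝ)))) :=
    LinearEquiv.isUnit_det' e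
  set A : Matrix (Fin m) (Fin m) ℝ := LinearMap.toMatrix' ((L : (Fin m → ℝ) →ₗ[ℝ] (Fin m → ℝ))) with hA
  have hAdet : IsUnit A.det := by rwa [hA, LinearMap.det_toMatrix']
  have hAmul : ∀ v, A.mulVec v = a v := by
    intro v
    have : Matrix.toLin' A v = A.mulVec v := Matrix.toLin'_apply A v
    rw [← this, hA, Matrix.toLin'_toMatrix']
    exact hLa v
  have hAinv : ∀ z, A⁻¹.mulVec z = b z := by
    intro z
    have hz : A.mulVec (b z) = z := by rw [hAmul, hab]
    calc A⁻¹.mulVec z = A⁻¹.mulVec (A.mulVec (b z)) := by rw [hz]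
      _ = (A⁻¹ * A).mulVec (b z) := (Matrix.mulVec_mulVec _ _ _)
      _ = b z := by rw [Matrix.nonsing_inv_mul A hAdet, Matrix.one_mulVec]
  refine ⟨A, hAdet, ?_, ?_, ?_⟩
  · intro x hx; rw [hAmul, ← hψa x hx]
  · intro z
    rw [hAinv]
    show ω z = ρ (ρinv (ω z))
    rw [hρri (ω z)]
  · intro t ht x hx
    have hsum : ∑ j, ψ (x j) = A.mulVec (∑ j, φ (x j)) := by
      rw [Finset.sum_congr rfl (fun j _ => by rw [hψa (x j) (hx j), ← hAmul])]
      exact (map_sum A.mulVecLin (fun j => φ (x j)) Finset.univ).symm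
    rw [hsum]
    have : A.mulVec (∑ j, φ (x j)) = a (∑ j, φ (x j)) := hAmul _
    rw [this]
    show ω (ωinv (ρ _)) = ρ _
    rw [hωri]
end

section
/- Fix n, m, k ≥ 1 and T ≥ 2. Let σ : ℝ → ℝ be a continuously differentiable bijection applied coordinatewise; let A, B ∈ ℝ^{m×k}; and let ψ, φ : ℝ^n × ℝ^n → ℝ^k be continuously differentiable. For t ≥ 1 define h_t(x_{≤t}) = σ(A · (1/t) Σ_{j=1}^t ψ(x_t, x_j)) and f_t(x_{≤t}) = σ(B · (1/t) Σ_{j=1}^t φ(x_t, x_j)). Suppose for each t ≤ T there is a nonempty regular closed set S_t ⊆ ([0,1]^n)^t whose projection onto every pair of distinct token coordinates (i, j) equals [0,1]^n × [0,1]^n, and h_t = f_t Lebesgue-almost everywhere on S_t. Then A ψ(x, y) = B φ(x, y) for all x, y ∈ [0,1]^n (linear identification of the attention representation), and h_t(x_{≤t}) = f_t(x_{≤t}) for every t ≥ 1 and every x_{≤t} ∈ ([0,1]^n)^t (length and compositional generalization). -/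
open MeasureTheory

/-- One-block causal transformer with nonlinear attention `ψ` and single-layer-perceptron
output: on a sequence of length `t + 1` (so lengths range over all `t ≥ 1`) it computes
`σ(A · (1/(t+1)) ∑_j ψ(x_last, x_j))`, with `σ` applied coordinatewise. -/
noncomputable def txOut {n m k : ℕ} (σ : ℝ → ℝ) (A : Matrix (Fin m) (Fin k) ℝ)
    (ψ : (Fin n → ℝ) → (Fin n → ℝ) → (Fin k → ℝ))
    (t : ℕ) (x : Fin (t + 1) → Fin n → ℝ) : Fin m → ℝ :=
  fun i => σ (A.mulVec (((t : ℝ) + 1)⁻¹ • ∑ j, ψ (x (Fin.last t)) (x j)) i)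

/-- **Theorem 3 (transformers, single-layer-perceptron output).**
If for each training length `t + 1 ≤ T` there is a nonempty regular closed support
`S t ⊆ ([0,1]ⁿ)^(t+1)` whose projection onto every pair of distinct token coordinates is
`[0,1]ⁿ × [0,1]ⁿ`, and the learned transformer `σ(A·(1/t)∑ψ(x_t,x_j))` agrees a.e. on `S t`
with the labeling transformer `σ(B·(1/t)∑φ(x_t,x_j))`, then `A ψ(x,y) = B φ(x,y)` on the
hypercube (linear identification of the attention representation) and the two models agree on
`([0,1]ⁿ)^t` for every length `t ≥ 1`. -/
theorem stmt_3 {n m k T : ℕ} (hn : 1 ≤ n) (hm : 1 ≤ m) (hk : 1 ≤ k) (hT : 2 ≤ T)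
    (σ : ℝ → ℝ) (hσdiff : ContDiff ℝ 1 σ) (hσbij : Function.Bijective σ)
    (A B : Matrix (Fin m) (Fin k) ℝ)
    (ψ φ : (Fin n → ℝ) → (Fin n → ℝ) → (Fin k → ℝ))
    (hψ : ContDiff ℝ 1 (fun p : (Fin n → ℝ) × (Fin n → ℝ) => ψ p.1 p.2))
    (hφ : ContDiff ℝ 1 (fun p : (Fin n → ℝ) × (Fin n → ℝ) => φ p.1 p.2))
    (S : (t : ℕ) → Set (Fin (t + 1) → Fin n → ℝ))
    (hSne : ∀ t : ℕ, t + 1 ≤ T → (S t).Nonempty)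
    (hSreg : ∀ t : ℕ, t + 1 ≤ T → S t = closure (interior (S t)))
    (hScube : ∀ t : ℕ, t + 1 ≤ T → S t ⊆ Set.Icc 0 1)
    (hSproj : ∀ t : ℕ, t + 1 ≤ T → ∀ i j : Fin (t + 1), i ≠ j →
      (fun x : Fin (t + 1) → Fin n → ℝ => (x i, x j)) '' S t =
        (Set.Icc (0 : Fin n → ℝ) 1) ×ˢ (Set.Icc (0 : Fin n → ℝ) 1))
    (hae : ∀ t : ℕ, t + 1 ≤ T →
      volume {x | x ∈ S t ∧ txOut σ A ψ t x ≠ txOut σ B φ t x} = 0) :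
    (∀ x ∈ Set.Icc (0 : Fin n → ℝ) 1, ∀ y ∈ Set.Icc (0 : Fin n → ℝ) 1,
      A.mulVec (ψ x y) = B.mulVec (φ x y)) ∧
    (∀ t : ℕ, ∀ x : Fin (t + 1) → Fin n → ℝ,
      (∀ j, x j ∈ Set.Icc (0 : Fin n → ℝ) 1) → txOut σ A ψ t x = txOut σ B φ t x) := by
  classical
  have hT1 : 1 + 1 ≤ T := hT
  have hσc : Continuous σ := hσdiff.continuous
  have hψc : Continuous (fun p : (Fin n → ℝ) × (Fin n → ℝ) => ψ p.1 p.2) := hψ.continuous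
  have hφc : Continuous (fun p : (Fin n → ℝ) × (Fin n → ℝ) => φ p.1 p.2) := hφ.continuous
  have hcont : ∀ (C : Matrix (Fin m) (Fin k) ℝ) (χ : (Fin n → ℝ) → (Fin n → ℝ) → (Fin k → ℝ)),
      Continuous (fun p : (Fin n → ℝ) × (Fin n → ℝ) => χ p.1 p.2) → ∀ t : ℕ,
      Continuous (txOut σ C χ t) := by
    intro C χ hχ t
    unfold txOut
    simp only [Matrix.mulVec, dotProduct]
    fun_prop
  have hc1 : Continuous (txOut σ A ψ 1) := hcont A ψ hψc 1
  have hc2 : Continuous (txOut σ B φ 1) := hcont B φ hφc 1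
  -- pointwise equality on S 1
  have key : ∀ z ∈ S 1, txOut σ A ψ 1 z = txOut σ B φ 1 z := by
    have hint : Set.EqOn (txOut σ A ψ 1) (txOut σ B φ 1) (interior (S 1)) := by
      intro z hz
      by_contra hne
      have hopen : IsOpen (interior (S 1) ∩ {x | txOut σ A ψ 1 x ≠ txOut σ B φ 1 x}) :=
        isOpen_interior.inter (isClosed_eq hc1 hc2).isOpen_compl
      have hpos : 0 < volume (interior (S 1) ∩ {x | txOut σ A ψ 1 x ≠ txOut σ B φ 1 x}) :=
        hopen.measure_pos volume ⟨z, hz, hne⟩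
      have hsub : interior (S 1) ∩ {x | txOut σ A ψ 1 x ≠ txOut σ B φ 1 x} ⊆
          {x | x ∈ S 1 ∧ txOut σ A ψ 1 x ≠ txOut σ B φ 1 x} := by
        rintro w ⟨hw1, hw2⟩
        exact ⟨interior_subset hw1, hw2⟩
      have := measure_mono (μ := volume) hsub
      rw [hae 1 hT1] at this
      exact absurd (le_antisymm this zero_le) hpos.ne'
    have := hint.closure hc1 hc2
    rw [← hSreg 1 hT1] at this
    exact fun z hz => this hz
  -- from the projection property, get the averaged identity
  have hpair : ∀ x ∈ Set.Icc (0 : Fin n → ℝ) 1, ∀ y ∈ Set.Icc (0 : Fin n → ℝ) 1,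
      A.mulVec (ψ x y + ψ x x) = B.mulVec (φ x y + φ x x) := by
    intro x hx y hy
    have hproj := hSproj 1 hT1 1 0 (by decide)
    have hmem : (x, y) ∈ (Set.Icc (0 : Fin n → ℝ) 1) ×ˢ (Set.Icc (0 : Fin n → ℝ) 1) :=
      ⟨hx, hy⟩
    rw [← hproj] at hmem
    obtain ⟨z, hzS, hz⟩ := hmem
    have hz1 : z 1 = x := congrArg Prod.fst hz
    have hz0 : z 0 = y := congrArg Prod.snd hz
    have heq := key z hzS
    have heq2 : ∀ i, σ (A.mulVec (((1:ℝ) + 1)⁻¹ • (ψ x y + ψ x x)) i)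
        = σ (B.mulVec (((1:ℝ) + 1)⁻¹ • (φ x y + φ x x)) i) := by
      intro i
      have := congrFun heq i
      unfold txOut at this
      simpa [Fin.sum_univ_two, Fin.last, hz0, hz1, add_comm] using this
    have heq3 : ∀ i, A.mulVec (((1:ℝ) + 1)⁻¹ • (ψ x y + ψ x x)) i
        = B.mulVec (((1:ℝ) + 1)⁻¹ • (φ x y + φ x x)) i :=
      fun i => hσbij.injective (heq2 i)
    have heq4 : ((1:ℝ) + 1)⁻¹ • A.mulVec (ψ x y + ψ x x)
        = ((1:ℝ) + 1)⁻¹ • B.mulVec (φ x y + φ x x) := by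
      funext i
      have := heq3 i
      rwa [Matrix.mulVec_smul, Matrix.mulVec_smul] at this
    have h2 : ((1:ℝ) + 1)⁻¹ ≠ 0 := by norm_num
    exact smul_right_injective _ h2 heq4
  -- linear identification
  have hid : ∀ x ∈ Set.Icc (0 : Fin n → ℝ) 1, ∀ y ∈ Set.Icc (0 : Fin n → ℝ) 1,
      A.mulVec (ψ x y) = B.mulVec (φ x y) := by
    intro x hx y hy
    have hdiag : A.mulVec (ψ x x) = B.mulVec (φ x x) := by
      have h := hpair x hx x hx
      rw [Matrix.mulVec_add, Matrix.mulVec_add] at h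
      funext i
      have := congrFun h i
      simp only [Pi.add_apply] at this
      linarith
    have h := hpair x hx y hy
    rw [Matrix.mulVec_add, Matrix.mulVec_add, hdiag] at h
    exact add_right_cancel h
  refine ⟨hid, ?_⟩
  intro t x hx
  have hsum : A.mulVec (∑ j, ψ (x (Fin.last t)) (x j))
      = B.mulVec (∑ j, φ (x (Fin.last t)) (x j)) := by
    rw [show A.mulVec (∑ j, ψ (x (Fin.last t)) (x j)) = ∑ j, A.mulVec (ψ (x (Fin.last t)) (x j))
        from map_sum A.mulVecLin _ _,
      show B.mulVec (∑ j, φ (x (Fin.last t)) (x j)) = ∑ j, B.mulVec (φ (x (Fin.last t)) (x j))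
        from map_sum B.mulVecLin _ _]
    exact Finset.sum_congr rfl fun j _ => hid _ (hx (Fin.last t)) _ (hx j)
  funext i
  unfold txOut
  rw [Matrix.mulVec_smul, Matrix.mulVec_smul, hsum]
end

section
/- Fix n, m ≥ 1 and a token-support set D ⊆ ℝ^n. Let ω, ρ : ℝ^m → ℝ^m be C¹-diffeomorphisms with ω(0) = 0 and ρ(0) = 0, and let ψ, φ : ℝ^n × ℝ^n → ℝ^m be continuous. For t ≥ 2 define h_t(x_{≤t}) = ω((1/(t−1)) Σ_{j=1}^{t−1} ψ(x_t, x_j)) and f_t(x_{≤t}) = ρ((1/(t−1)) Σ_{j=1}^{t−1} φ(x_t, x_j)). Suppose (i) h_2(x₁, x₂) = f_2(x₁, x₂) for all (x₁, x₂) ∈ D × D; (ii) h_3(x₁, x₂, x₃) = f_3(x₁, x₂, x₃) for all (x₁, x₂, x₃) ∈ D × D × D; and (iii) {(φ(x, y), φ(x, z)) : x, y, z ∈ D} = ℝ^m × ℝ^m. Then a := ω^{-1} ∘ ρ is an invertible linear map: there is an invertible matrix A ∈ ℝ^{m×m} with ψ(x, y) = A φ(x, y) for all x, y ∈ D and ω(z)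 = ρ(A^{-1} z) for all z ∈ ℝ^m; consequently h_t(x_{≤t}) = f_t(x_{≤t}) for every t ≥ 2 and every x_{≤t} ∈ D^t (length and compositional generalization). -/
/-- One-block causal transformer attending over the context excluding the current token, with
`C¹`-diffeomorphism output map: on a sequence of length `t + 2` (so lengths range over all
`t ≥ 2`) it computes `ω((1/(t+1)) ∑_{j<t+1} ψ(x_last, x_j))`. -/
noncomputable def txOutD {n m : ℕ} (ω : (Fin m → ℝ) → (Fin m → ℝ))
    (ψ : (Fin n → ℝ) → (Fin n → ℝ) → (Fin m → ℝ))
    (t : ℕ) (x : Fin (t + 2) → Fin n → ℝ) : Fin m → ℝ :=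
  ω (((t : ℝ) + 1)⁻¹ • ∑ j : Fin (t + 1), ψ (x (Fin.last (t + 1))) (x j.castSucc))

/-- **Theorem 4 (transformers, `C¹`-diffeomorphism output, context excludes current token).**
If `h₂ = f₂` on `D × D`, `h₃ = f₃` on `D × D × D`, and `{(φ(x,y), φ(x,z)) : x,y,z ∈ D} = ℝᵐ × ℝᵐ`,
then `a = ω⁻¹ ∘ ρ` is an invertible linear map: there is an invertible matrix `A` with
`ψ(x,y) = A φ(x,y)` on `D × D` and `ω(z) = ρ(A⁻¹ z)`; consequently `h_t = f_t` on `D^t` for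
every `t ≥ 2`. -/
theorem stmt_4 {n m : ℕ} (hn : 1 ≤ n) (hm : 1 ≤ m)
    (D : Set (Fin n → ℝ))
    (ω ρ ωinv ρinv : (Fin m → ℝ) → (Fin m → ℝ))
    (hω : ContDiff ℝ 1 ω) (hωinv : ContDiff ℝ 1 ωinv)
    (hωli : Function.LeftInverse ωinv ω) (hωri : Function.RightInverse ωinv ω)
    (hρ : ContDiff ℝ 1 ρ) (hρinv : ContDiff ℝ 1 ρinv)
    (hρli : Function.LeftInverse ρinv ρ) (hρri : Function.RightInverse ρinv ρ)
    (hω0 : ω 0 = 0) (hρ0 : ρ 0 = 0)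
    (ψ φ : (Fin n → ℝ) → (Fin n → ℝ) → (Fin m → ℝ))
    (hψ : Continuous (fun p : (Fin n → ℝ) × (Fin n → ℝ) => ψ p.1 p.2))
    (hφ : Continuous (fun p : (Fin n → ℝ) × (Fin n → ℝ) => φ p.1 p.2))
    (h2 : ∀ x₁ ∈ D, ∀ x₂ ∈ D, ω (ψ x₂ x₁) = ρ (φ x₂ x₁))
    (h3 : ∀ x₁ ∈ D, ∀ x₂ ∈ D, ∀ x₃ ∈ D,
      ω ((2 : ℝ)⁻¹ • (ψ x₃ x₁ + ψ x₃ x₂)) = ρ ((2 : ℝ)⁻¹ • (φ x₃ x₁ + φ x₃ x₂)))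
    (hspan : (fun q : (Fin n → ℝ) × (Fin n → ℝ) × (Fin n → ℝ) =>
        (φ q.1 q.2.1, φ q.1 q.2.2)) '' (D ×ˢ (D ×ˢ D)) = Set.univ) :
    ∃ A : Matrix (Fin m) (Fin m) ℝ, IsUnit A.det ∧
      (∀ x ∈ D, ∀ y ∈ D, ψ x y = A.mulVec (φ x y)) ∧
      (∀ z : Fin m → ℝ, ω z = ρ (A⁻¹.mulVec z)) ∧
      (∀ t : ℕ, ∀ x : Fin (t + 2) → Fin n → ℝ, (∀ j, x j ∈ D) →
        txOutD ω ψ t x = txOutD ρ φ t x) := by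
  classical
  set a : (Fin m → ℝ) → (Fin m → ℝ) := fun z => ωinv (ρ z) with ha_def
  set b : (Fin m → ℝ) → (Fin m → ℝ) := fun z => ρinv (ω z) with hb_def
  have hab : ∀ z, a (b z) = z := by
    intro z; simp only [ha_def, hb_def, hρri (ω z)]; exact hωli z
  have hba : ∀ z, b (a z) = z := by
    intro z; simp only [ha_def, hb_def, hωri (ρ z)]; exact hρli z
  have ha0 : a 0 = 0 := by
    have h := hωli 0
    rw [hω0] at h
    simp only [ha_def, hρ0]
    exact h
  have haφ : ∀ x ∈ D, ∀ y ∈ D, ψ x y = a (φ x y) := by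
    intro x hx y hy
    simp only [ha_def]
    rw [← h2 y hy x hx]
    exact (hωli _).symm
  have hmid : ∀ u v : Fin m → ℝ, a ((2:ℝ)⁻¹ • (u + v)) = (2:ℝ)⁻¹ • (a u + a v) := by
    intro u v
    have hmem : ((u, v) : (Fin m → ℝ) × (Fin m → ℝ)) ∈
        (fun q : (Fin n → ℝ) × (Fin n → ℝ) × (Fin n → ℝ) =>
          (φ q.1 q.2.1, φ q.1 q.2.2)) '' (D ×ˢ (D ×ˢ D)) := by
      rw [hspan]; trivial
    obtain ⟨⟨x, y, z⟩, ⟨hx, hy, hz⟩, hq⟩ := hmem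
    have h1 : φ x y = u := congrArg Prod.fst hq
    have h2' : φ x z = v := congrArg Prod.snd hq
    subst h1 h2'
    calc a ((2:ℝ)⁻¹ • (φ x y + φ x z))
        = ωinv (ρ ((2:ℝ)⁻¹ • (φ x y + φ x z))) := rfl
      _ = ωinv (ω ((2:ℝ)⁻¹ • (ψ x y + ψ x z))) := by rw [h3 y hy z hz x hx]
      _ = (2:ℝ)⁻¹ • (ψ x y + ψ x z) := hωli _
      _ = (2:ℝ)⁻¹ • (a (φ x y) + a (φ x z)) := by rw [haφ x hx y hy, haφ x hx z hz]
  have hhalf : ∀ u, a ((2:ℝ)⁻¹ • u) = (2:ℝ)⁻¹ • a u := by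
    intro u
    simpa [ha0] using hmid u 0
  have hadd : ∀ u v, a (u + v) = a u + a v := by
    intro u v
    have h1 := hmid u v
    rw [hhalf (u + v)] at h1
    exact smul_right_injective (Fin m → ℝ) (by norm_num : ((2:ℝ)⁻¹) ≠ 0) h1
  have hacont : Continuous a := hωinv.continuous.comp hρ.continuous
  have hbcont : Continuous b := hρinv.continuous.comp hω.continuous
  set aL : (Fin m → ℝ) →L[ℝ] (Fin m → ℝ) :=
    (AddMonoidHom.mk' a hadd).toRealLinearMap hacont with haL_def
  have haL : ∀ v, aL v = a v := fun v => rfl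
  have hbadd : ∀ u v, b (u + v) = b u + b v := by
    intro u v
    have : b (u + v) = b (a (b u) + a (b v)) := by rw [hab, hab]
    rw [this, ← hadd, hba]
  set bL : (Fin m → ℝ) →L[ℝ] (Fin m → ℝ) :=
    (AddMonoidHom.mk' b hbadd).toRealLinearMap hbcont with hbL_def
  have hbL : ∀ v, bL v = b v := fun v => rfl
  set A : Matrix (Fin m) (Fin m) ℝ := LinearMap.toMatrix' (aL : (Fin m → ℝ) →ₗ[ℝ] (Fin m → ℝ))
    with hA_def
  set B : Matrix (Fin m) (Fin m) ℝ := LinearMap.toMatrix' (bL : (Fin m → ℝ) →ₗ[ℝ] (Fin m → ℝ))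
    with hB_def
  have hAmul : ∀ v, A.mulVec v = a v := by
    intro v
    rw [hA_def, ← Matrix.toLin'_apply, Matrix.toLin'_toMatrix']
    exact haL v
  have hBmul : ∀ v, B.mulVec v = b v := by
    intro v
    rw [hB_def, ← Matrix.toLin'_apply, Matrix.toLin'_toMatrix']
    exact hbL v
  have hAB : A * B = 1 := by
    rw [hA_def, hB_def, ← LinearMap.toMatrix'_comp]
    rw [show ((aL : (Fin m → ℝ) →ₗ[ℝ] (Fin m → ℝ)).comp
          (bL : (Fin m → ℝ) →ₗ[ℝ] (Fin m → ℝ))) = LinearMap.id from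
        LinearMap.ext fun z => hab z, LinearMap.toMatrix'_id]
  have hdet : IsUnit A.det := Matrix.isUnit_det_of_right_inverse hAB
  have hAinv : A⁻¹ = B := Matrix.inv_eq_right_inv hAB
  refine ⟨A, hdet, ?_, ?_, ?_⟩
  · intro x hx y hy
    rw [hAmul]
    exact haφ x hx y hy
  · intro z
    rw [hAinv, hBmul]
    simp only [hb_def]
    exact (hρri (ω z)).symm
  · intro t x hx
    unfold txOutD
    have h1 : ∀ j : Fin (t+1), ψ (x (Fin.last (t+1))) (x j.castSucc)
        = aL (φ (x (Fin.last (t+1))) (x j.castSucc)) := by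
      intro j
      rw [haL]
      exact haφ _ (hx _) _ (hx _)
    rw [Finset.sum_congr rfl (fun j _ => h1 j), ← map_sum, ← map_smul]
    rw [haL]
    simp only [ha_def]
    exact hωri _
end

section
/- Fix n ≥ 1 and let σ(s) = 1/(1 + e^{−s}), applied coordinatewise to vectors. Let A, Λ, B, Ã, Λ̃, B̃ ∈ ℝ^{n×n} all be invertible. Define hidden states h_0 = 0, h_t(x_{≤t}) = σ(Λ h_{t−1} + B x_t) and outputs y_t(x_{≤t}) = σ(A h_t), and likewise h̃_t, ỹ_t using (Ã, Λ̃, B̃). Suppose S₁ ⊆ ℝ^n is a nonempty regular closed set and S₂ ⊆ ℝ^n × ℝ^n is a set whose projection onto the first coordinate equals S₁, such that y_1(x_1) = ỹ_1(x_1) for all x_1 ∈ S₁ and y_2(x_1, x_2) = ỹ_2(x_1, x_2) for all (x_1, x_2) ∈ S₂. Then there is a permutation matrix Π with Ã = A Π, B̃ = Π^T B and Λ̃ = Π^T Λ Π; moreover h_t(x_{≤t}) = Π h̃_t(x_{≤t}) for every t ≥ 1 and every x_{≤t} ∈ (ℝ^n)^t (permutation identification of the hidden states), and y_t(x_{≤t})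 = ỹ_t(x_{≤t}) for every t ≥ 1 and every x_{≤t} ∈ (ℝ^n)^t (length and compositional generalization). -/
open Matrix

/-- The sigmoid function. -/
noncomputable def sig (s : ℝ) : ℝ := 1 / (1 + Real.exp (-s))

/-- A permutation matrix: a 0–1 matrix with exactly one 1 in each row and each column. -/
def IsPermMatrix {n : ℕ} (P : Matrix (Fin n) (Fin n) ℝ) : Prop :=
  (∀ i j, P i j = 0 ∨ P i j = 1) ∧ (∀ i, ∃! j, P i j = 1) ∧ (∀ j, ∃! i, P i j = 1)

/-- Hidden state of a vanilla RNN with sigmoid recurrence: `h₀ = 0`,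
`h_t = σ(Λ h_{t−1} + B x_t)` (coordinatewise sigmoid). -/
noncomputable def rnnH {n : ℕ} (Λ B : Matrix (Fin n) (Fin n) ℝ) :
    (t : ℕ) → (Fin t → Fin n → ℝ) → (Fin n → ℝ)
  | 0, _ => 0
  | t + 1, x => fun i =>
      sig ((Λ.mulVec (rnnH Λ B t fun j => x j.castSucc) + B.mulVec (x (Fin.last t))) i)

/-- Output of a vanilla RNN with single-layer-perceptron readout: `y_t = σ(A h_t)`. -/
noncomputable def rnnY {n : ℕ} (A Λ B : Matrix (Fin n) (Fin n) ℝ)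
    (t : ℕ) (x : Fin t → Fin n → ℝ) : Fin n → ℝ :=
  fun i => sig (A.mulVec (rnnH Λ B t x) i)

open Filter Real


lemma one_add_exp_pos (s : ℝ) : 0 < 1 + Real.exp s := by positivity

lemma sig_injective : Function.Injective sig := by
  intro a b h
  unfold sig at h
  rw [div_eq_div_iff (one_add_exp_pos (-a)).ne' (one_add_exp_pos (-b)).ne'] at h
  have : Real.exp (-a) = Real.exp (-b) := by linarith
  have := Real.exp_injective this
  linarith

lemma sig_zero : sig 0 = 1/2 := by simp [sig]; norm_num

lemma sig_one_ne_half : sig 1 ≠ 1/2 := by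
  intro h
  have := sig_injective (h.trans sig_zero.symm)
  norm_num at this

lemma tendsto_sig_atTop : Tendsto sig atTop (nhds 1) := by
  have h1 : Tendsto (fun s : ℝ => Real.exp (-s)) atTop (nhds 0) :=
    Real.tendsto_exp_neg_atTop_nhds_zero
  have h2 : Tendsto (fun s : ℝ => 1 + Real.exp (-s)) atTop (nhds 1) := by
    simpa using h1.const_add 1
  have := (tendsto_const_nhds (x := (1:ℝ))).div h2 (by norm_num)
  convert this using 1
  · funext s
    simp [sig]
  · norm_num

lemma tendsto_sig_atBot : Tendsto sig atBot (nhds 0) := by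
  have h1 : Tendsto (fun s : ℝ => Real.exp (-s)) atBot atTop :=
    Real.tendsto_exp_atTop.comp tendsto_neg_atBot_atTop
  have h2 : Tendsto (fun s : ℝ => 1 + Real.exp (-s)) atBot atTop :=
    tendsto_atTop_add_const_left _ 1 h1
  have h3 := h2.inv_tendsto_atTop
  have h4 : sig = (fun s : ℝ => 1 + Real.exp (-s))⁻¹ := by
    funext s; simp [sig, one_div]
  rw [h4]; exact h3

lemma analyticOnNhd_sig : AnalyticOnNhd ℝ sig Set.univ := by
  intro x _
  have h1 : AnalyticAt ℝ (fun s : ℝ => 1 + Real.exp (-s)) x := by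
    exact analyticAt_const.add (analyticAt_rexp.comp (analyticAt_id.neg))
  exact (analyticAt_const.div h1 (one_add_exp_pos (-x)).ne')

lemma analytic_aux {m : ℕ} (c α β : Fin m → ℝ) :
    AnalyticOnNhd ℝ (fun s : ℝ => ∑ j, c j * sig (α j + s * β j)) Set.univ := by
  apply Finset.analyticOnNhd_fun_sum
  intro j _
  intro x _
  exact analyticAt_const.mul ((analyticOnNhd_sig _ (Set.mem_univ _)).comp
    (analyticAt_const.add (analyticAt_id.mul analyticAt_const)))

lemma extend_zero {n : ℕ} (f : (Fin n → ℝ) → ℝ)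
    (hf : ∀ a v : Fin n → ℝ, AnalyticOnNhd ℝ (fun s : ℝ => f (a + s • v)) Set.univ)
    (U : Set (Fin n → ℝ)) (hU : IsOpen U) (a : Fin n → ℝ) (ha : a ∈ U)
    (hz : ∀ x ∈ U, f x = 0) (x : Fin n → ℝ) : f x = 0 := by
  set g : ℝ → ℝ := fun s => f (a + s • (x - a)) with hg
  have hcont : Continuous fun s : ℝ => a + s • (x - a) := by continuity
  have hmem : ∀ᶠ s in nhds (0:ℝ), (a + s • (x - a)) ∈ U := by
    have : (a + (0:ℝ) • (x - a)) ∈ U := by simpa using ha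
    exact (hcont.continuousAt).eventually_mem (hU.mem_nhds this)
  have hev : g =ᶠ[nhds (0:ℝ)] 0 := by
    filter_upwards [hmem] with s hs
    exact hz _ hs
  have := (hf a (x - a)).eqOn_zero_of_preconnected_of_eventuallyEq_zero
    isPreconnected_univ (Set.mem_univ (0:ℝ)) hev (Set.mem_univ (1:ℝ))
  simpa [g] using this
noncomputable def pmat {n : ℕ} (e : Equiv.Perm (Fin n)) : Matrix (Fin n) (Fin n) ℝ :=
  Matrix.of fun i j => if j = e i then 1 else 0

lemma pmat_mulVec {n : ℕ} (e : Equiv.Perm (Fin n)) (v : Fin n → ℝ) (i : Fin n) :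
    (pmat e).mulVec v i = v (e i) := by
  simp [pmat, Matrix.mulVec, dotProduct, Finset.sum_ite_eq']

lemma pmat_transpose {n : ℕ} (e : Equiv.Perm (Fin n)) : (pmat e)ᵀ = pmat e.symm := by
  ext i j
  simp only [Matrix.transpose_apply, pmat, Matrix.of_apply]
  congr 1
  simp only [eq_iff_iff, Equiv.eq_symm_apply]
  exact eq_comm

lemma pmat_mul_pmat {n : ℕ} (e f : Equiv.Perm (Fin n)) :
    pmat e * pmat f = pmat (e.trans f) := by
  ext i j
  simp only [Matrix.mul_apply, pmat, Matrix.of_apply, ite_mul, one_mul, zero_mul,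
    Finset.sum_ite_eq' , Finset.mem_univ, if_true]
  rfl

lemma pmat_refl {n : ℕ} : pmat (Equiv.refl (Fin n)) = 1 := by
  ext i j
  simp [pmat, Matrix.one_apply, eq_comm]

lemma pmat_symm_mul {n : ℕ} (e : Equiv.Perm (Fin n)) : pmat e.symm * pmat e = 1 := by
  rw [pmat_mul_pmat]
  have : (e.symm.trans e) = Equiv.refl (Fin n) := by ext i; simp
  rw [this, pmat_refl]

lemma pmat_mul_symm {n : ℕ} (e : Equiv.Perm (Fin n)) : pmat e * pmat e.symm = 1 := by
  have := pmat_symm_mul e.symm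
  simpa using this

lemma isPermMatrix_pmat {n : ℕ} (e : Equiv.Perm (Fin n)) : IsPermMatrix (pmat e) := by
  refine ⟨fun i j => ?_, fun i => ?_, fun j => ?_⟩
  · by_cases h : j = e i <;> simp [pmat, h]
  · refine ⟨e i, by simp [pmat], fun j hj => ?_⟩
    by_contra h
    simp [pmat, h] at hj
  · refine ⟨e.symm j, by simp [pmat], fun i hi => ?_⟩
    by_contra h
    have : j ≠ e i := by
      intro hh
      exact h (by simp [hh])
    simp [pmat, this] at hi

lemma row_lemma {n : ℕ} (c m : Fin n → ℝ)
    (H : ∀ u : Fin n → ℝ, sig (∑ j, c j * u j) = ∑ j, m j * sig (u j))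
    (hc : ∃ j, c j ≠ 0) :
    ∃ j₀, (∀ j, c j = if j = j₀ then 1 else 0) ∧ (∀ j, m j = if j = j₀ then 1 else 0) := by
  have hR : ∑ j, m j = 1 := by
    have h0 := H 0
    simp only [Pi.zero_apply, mul_zero, Finset.sum_const_zero, sig_zero] at h0
    have : ∑ j, m j * (1/2) = (∑ j, m j) * (1/2) := by rw [Finset.sum_mul]
    rw [this] at h0
    linarith
  have E1 : ∀ (j : Fin n) (s : ℝ), sig (c j * s) = 1/2 + m j * (sig s - 1/2) := by
    intro j s
    have h := H (fun k => if k = j then s else 0)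
    have hl : ∑ k, c k * (if k = j then s else 0) = c j * s := by
      rw [Finset.sum_congr rfl (fun k _ => by rw [mul_ite, mul_zero])]
      exact Finset.sum_ite_eq' _ _ _ |>.trans (by simp)
    have hr : ∀ k, m k * sig (if k = j then s else 0)
        = m k * (1/2) + (if k = j then m j * (sig s - 1/2) else 0) := by
      intro k
      by_cases hk : k = j
      · subst hk; simp [sig_zero]; ring
      · simp [hk, sig_zero]
    rw [hl, Finset.sum_congr rfl (fun k _ => hr k), Finset.sum_add_distrib,
      ← Finset.sum_mul, hR, Finset.sum_ite_eq' _ _ _] at h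
    simpa using h
  have hm0 : ∀ j, c j = 0 → m j = 0 := by
    intro j hj
    have h := E1 j 1
    rw [hj, zero_mul, sig_zero] at h
    have hne : sig 1 - 1/2 ≠ 0 := sub_ne_zero.mpr sig_one_ne_half
    have : m j * (sig 1 - 1/2) = 0 := by linarith
    exact (mul_eq_zero.mp this).resolve_right hne
  have Esub : ∀ j, c j ≠ 0 → ∀ r : ℝ, sig r = 1/2 + m j * (sig (r / c j) - 1/2) := by
    intro j hj r
    have := E1 j (r / c j)
    rwa [mul_div_cancel₀ _ hj] at this
  have hsign : ∀ j, c j ≠ 0 → (0 < c j ∧ m j = 1) ∨ (c j < 0 ∧ m j = -1) := by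
    intro j hj
    rcases hj.lt_or_gt with hneg | hpos
    · right
      refine ⟨hneg, ?_⟩
      have hdiv : Filter.Tendsto (fun r : ℝ => sig (r / c j)) Filter.atTop (nhds 0) :=
        tendsto_sig_atBot.comp ((tendsto_div_const_atBot_of_neg hneg).mpr Filter.tendsto_id)
      have T2 : Filter.Tendsto (fun r : ℝ => 1/2 + m j * (sig (r / c j) - 1/2))
          Filter.atTop (nhds (1/2 + m j * (0 - 1/2))) :=
        (((hdiv.sub_const (1/2)).const_mul (m j)).const_add (1/2))
      have T1 : Filter.Tendsto (fun r : ℝ => 1/2 + m j * (sig (r / c j) - 1/2))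
          Filter.atTop (nhds 1) := by
        have : (fun r : ℝ => 1/2 + m j * (sig (r / c j) - 1/2)) = sig := by
          funext r; exact (Esub j hj r).symm
        rw [this]; exact tendsto_sig_atTop
      have := tendsto_nhds_unique T1 T2
      linarith
    · left
      refine ⟨hpos, ?_⟩
      have hdiv : Filter.Tendsto (fun r : ℝ => sig (r / c j)) Filter.atTop (nhds 1) :=
        tendsto_sig_atTop.comp ((tendsto_div_const_atTop_of_pos hpos).mpr Filter.tendsto_id)
      have T2 : Filter.Tendsto (fun r : ℝ => 1/2 + m j * (sig (r / c j) - 1/2))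
          Filter.atTop (nhds (1/2 + m j * (1 - 1/2))) :=
        (((hdiv.sub_const (1/2)).const_mul (m j)).const_add (1/2))
      have T1 : Filter.Tendsto (fun r : ℝ => 1/2 + m j * (sig (r / c j) - 1/2))
          Filter.atTop (nhds 1) := by
        have : (fun r : ℝ => 1/2 + m j * (sig (r / c j) - 1/2)) = sig := by
          funext r; exact (Esub j hj r).symm
        rw [this]; exact tendsto_sig_atTop
      have := tendsto_nhds_unique T1 T2
      linarith
  have Tlim : ∀ j, c j ≠ 0 →
      Filter.Tendsto (fun r : ℝ => m j * (sig (r / c j) - 1/2)) Filter.atTop (nhds (1/2)) := by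
    intro j hj
    rcases hsign j hj with ⟨hpos, hm⟩ | ⟨hneg, hm⟩
    · have hdiv : Filter.Tendsto (fun r : ℝ => sig (r / c j)) Filter.atTop (nhds 1) :=
        tendsto_sig_atTop.comp ((tendsto_div_const_atTop_of_pos hpos).mpr Filter.tendsto_id)
      have := (hdiv.sub_const (1/2)).const_mul (m j)
      rw [hm] at this ⊢
      convert this using 2
      norm_num
    · have hdiv : Filter.Tendsto (fun r : ℝ => sig (r / c j)) Filter.atTop (nhds 0) :=
        tendsto_sig_atBot.comp ((tendsto_div_const_atBot_of_neg hneg).mpr Filter.tendsto_id)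
      have := (hdiv.sub_const (1/2)).const_mul (m j)
      rw [hm] at this ⊢
      convert this using 2
      norm_num
  have huniq : ∀ j k, j ≠ k → c j ≠ 0 → c k ≠ 0 → False := by
    intro j k hjk hj hk
    have Heq : ∀ r : ℝ, sig (r + r)
        = 1/2 + (m j * (sig (r / c j) - 1/2) + m k * (sig (r / c k) - 1/2)) := by
      intro r
      have h := H (fun l => if l = j then r / c j else if l = k then r / c k else 0)
      have hl : ∀ l, c l * (if l = j then r / c j else if l = k then r / c k else 0)
          = (if l = j then r else 0) + (if l = k then r else 0) := by
        intro l
        by_cases h1 : l = j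
        · subst h1; rw [if_pos rfl, if_pos rfl, if_neg hjk, mul_div_cancel₀ _ hj, add_zero]
        · by_cases h2 : l = k
          · subst h2; rw [if_neg h1, if_pos rfl, if_neg h1, if_pos rfl,
              mul_div_cancel₀ _ hk, zero_add]
          · simp [h1, h2]
      have hrr : ∀ l, m l * sig (if l = j then r / c j else if l = k then r / c k else 0)
          = m l * (1/2) + ((if l = j then m j * (sig (r / c j) - 1/2) else 0)
            + (if l = k then m k * (sig (r / c k) - 1/2) else 0)) := by
        intro l
        by_cases h1 : l = j
        · subst h1; rw [if_pos rfl, if_pos rfl, if_neg hjk]; ring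
        · by_cases h2 : l = k
          · subst h2; rw [if_neg h1, if_pos rfl, if_neg h1, if_pos rfl]; ring
          · simp [h1, h2, sig_zero]
      rw [Finset.sum_congr rfl (fun l _ => hl l), Finset.sum_add_distrib,
        Finset.sum_ite_eq' _ _ _, Finset.sum_ite_eq' _ _ _,
        Finset.sum_congr rfl (fun l _ => hrr l), Finset.sum_add_distrib,
        ← Finset.sum_mul, hR, Finset.sum_add_distrib,
        Finset.sum_ite_eq' _ _ _, Finset.sum_ite_eq' _ _ _] at h
      simpa using h
    have T1 : Filter.Tendsto (fun r : ℝ => sig (r + r)) Filter.atTop (nhds 1) :=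
      tendsto_sig_atTop.comp (Filter.tendsto_id.atTop_add_atTop Filter.tendsto_id)
    have T2 : Filter.Tendsto (fun r : ℝ => sig (r + r)) Filter.atTop (nhds (1/2 + (1/2 + 1/2))) := by
      have : (fun r : ℝ => sig (r + r)) = fun r : ℝ =>
          1/2 + (m j * (sig (r / c j) - 1/2) + m k * (sig (r / c k) - 1/2)) := by
        funext r; exact Heq r
      rw [this]
      exact ((Tlim j hj).add (Tlim k hk)).const_add (1/2)
    have := tendsto_nhds_unique T1 T2
    norm_num at this
  obtain ⟨j₀, hj₀⟩ := hc
  have hczero : ∀ j, j ≠ j₀ → c j = 0 := by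
    intro j hj
    by_contra h
    exact huniq j j₀ hj h hj₀
  have hmzero : ∀ j, j ≠ j₀ → m j = 0 := fun j hj => hm0 j (hczero j hj)
  have hmj₀ : m j₀ = 1 := by
    have := Finset.sum_eq_single j₀ (fun j _ hj => hmzero j hj) (fun h => absurd (Finset.mem_univ _) h)
    rw [this] at hR; exact hR
  have hcj₀ : c j₀ = 1 := by
    rcases hsign j₀ hj₀ with ⟨hpos, hm⟩ | ⟨hneg, hm⟩
    · have h := E1 j₀ 1
      rw [hmj₀, mul_one] at h
      have : sig (c j₀) = sig 1 := by rw [h]; ring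
      exact sig_injective this
    · rw [hmj₀] at hm; norm_num at hm
  refine ⟨j₀, fun j => ?_, fun j => ?_⟩
  · by_cases hj : j = j₀
    · subst hj; simp [hcj₀]
    · simp [hj, hczero j hj]
  · by_cases hj : j = j₀
    · subst hj; simp [hmj₀]
    · simp [hj, hmzero j hj]


lemma rnnH_one {n : ℕ} (Λ B : Matrix (Fin n) (Fin n) ℝ) (x₁ : Fin n → ℝ) :
    rnnH Λ B 1 ![x₁] = fun i => sig (B.mulVec x₁ i) := by
  funext i
  simp [rnnH, Matrix.mulVec_zero]

lemma rnnH_two {n : ℕ} (Λ B : Matrix (Fin n) (Fin n) ℝ) (x₁ x₂ : Fin n → ℝ) :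
    rnnH Λ B 2 ![x₁, x₂]
      = fun i => sig ((Λ.mulVec (fun k => sig (B.mulVec x₁ k)) + B.mulVec x₂) i) := by
  funext i
  have h1 : (fun j : Fin 1 => ![x₁, x₂] j.castSucc) = ![x₁] := by
    funext j
    fin_cases j <;> rfl
  have h2 : ![x₁, x₂] (Fin.last 1) = x₂ := rfl
  simp only [rnnH, h1, h2]
  simp [Matrix.mulVec_zero, show ![x₁, x₂] (Fin.last 0).castSucc = x₁ from rfl]

lemma rnnH_perm {n : ℕ} (Λ B : Matrix (Fin n) (Fin n) ℝ) (e : Equiv.Perm (Fin n)) :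
    ∀ (t : ℕ) (x : Fin t → Fin n → ℝ),
      rnnH (pmat e * Λ * pmat e.symm) (pmat e * B) t x = (pmat e).mulVec (rnnH Λ B t x) := by
  intro t
  induction t with
  | zero => intro x; simp [rnnH, Matrix.mulVec_zero]
  | succ t ih =>
    intro x
    funext i
    have hmid : (pmat e * Λ * pmat e.symm).mulVec ((pmat e).mulVec (rnnH Λ B t fun j => x j.castSucc))
        = (pmat e).mulVec (Λ.mulVec (rnnH Λ B t fun j => x j.castSucc)) := by
      rw [Matrix.mulVec_mulVec, Matrix.mul_assoc, Matrix.mul_assoc, pmat_symm_mul,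
        Matrix.mul_one, ← Matrix.mulVec_mulVec]
    show sig (((pmat e * Λ * pmat e.symm).mulVec (rnnH (pmat e * Λ * pmat e.symm) (pmat e * B) t
        fun j => x j.castSucc) + (pmat e * B).mulVec (x (Fin.last t))) i)
      = (pmat e).mulVec (rnnH Λ B (t+1) x) i
    rw [ih, hmid, ← Matrix.mulVec_mulVec, ← Matrix.mulVec_add, pmat_mulVec]
    rw [pmat_mulVec]
    rfl


/-- **Theorem 6 (vanilla RNNs).** If the true RNN `(A, Λ, B)` and the learned RNN
`(A', Λ', B')`, all matrices invertible, produce equal outputs at length 1 on a nonempty regular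
closed set `S₁` and at length 2 on a set `S₂` whose first-coordinate projection is `S₁`, then the
parameters agree up to a permutation matrix `Π` (`A' = AΠ`, `B' = Πᵀ B`, `Λ' = Πᵀ Λ Π`), the
hidden states satisfy `h_t = Π h'_t` on all inputs (permutation identification), and the outputs
agree at every length on all inputs (length and compositional generalization). -/
theorem stmt_7 {n : ℕ} (hn : 1 ≤ n)
    (A Λ B A' Λ' B' : Matrix (Fin n) (Fin n) ℝ)
    (hA : IsUnit A.det) (hΛ : IsUnit Λ.det) (hB : IsUnit B.det)
    (hA' : IsUnit A'.det) (hΛ' : IsUnit Λ'.det) (hB' : IsUnit B'.det)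
    (S₁ : Set (Fin n → ℝ)) (hS₁ne : S₁.Nonempty) (hS₁reg : S₁ = closure (interior S₁))
    (S₂ : Set ((Fin n → ℝ) × (Fin n → ℝ))) (hS₂proj : Prod.fst '' S₂ = S₁)
    (h1 : ∀ x₁ ∈ S₁, rnnY A Λ B 1 ![x₁] = rnnY A' Λ' B' 1 ![x₁])
    (h2 : ∀ p ∈ S₂, rnnY A Λ B 2 ![p.1, p.2] = rnnY A' Λ' B' 2 ![p.1, p.2]) :
    ∃ P : Matrix (Fin n) (Fin n) ℝ, IsPermMatrix P ∧
      A' = A * P ∧ B' = Pᵀ * B ∧ Λ' = Pᵀ * Λ * P ∧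
      (∀ t : ℕ, 1 ≤ t → ∀ x : Fin t → Fin n → ℝ,
        rnnH Λ B t x = P.mulVec (rnnH Λ' B' t x)) ∧
      (∀ t : ℕ, 1 ≤ t → ∀ x : Fin t → Fin n → ℝ,
        rnnY A Λ B t x = rnnY A' Λ' B' t x) := by
  classical
  -- interior is nonempty
  have hInt : (interior S₁).Nonempty := by
    by_contra h
    rw [Set.not_nonempty_iff_eq_empty] at h
    rw [h, closure_empty] at hS₁reg
    exact hS₁ne.ne_empty hS₁reg
  obtain ⟨a, ha⟩ := hInt
  have hsub : interior S₁ ⊆ S₁ := fun x hx => hS₁reg ▸ subset_closure hx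
  have hBinv : ∀ u : Fin n → ℝ, B.mulVec (B⁻¹.mulVec u) = u := by
    intro u
    rw [Matrix.mulVec_mulVec, Matrix.mul_nonsing_inv _ hB, Matrix.one_mulVec]
  -- Stage 1 on S₁
  have st1 : ∀ x ∈ S₁, ∀ i : Fin n,
      (∑ j, A i j * sig (B.mulVec x j)) - (∑ j, A' i j * sig (B'.mulVec x j)) = 0 := by
    intro x hx i
    have h := congrFun (h1 x hx) i
    simp only [rnnY, rnnH_one] at h
    have h' := sig_injective h
    simp only [Matrix.mulVec, dotProduct] at h'
    rw [sub_eq_zero]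
    exact h'
  -- globalize via analytic continuation along lines
  have g1 : ∀ (x : Fin n → ℝ) (i : Fin n),
      (∑ j, A i j * sig (B.mulVec x j)) = ∑ j, A' i j * sig (B'.mulVec x j) := by
    intro x i
    have hz := extend_zero
      (fun x => (∑ j, A i j * sig (B.mulVec x j)) - (∑ j, A' i j * sig (B'.mulVec x j)))
      (by
        intro p v
        have hfun : (fun s : ℝ =>
            (∑ j, A i j * sig (B.mulVec (p + s • v) j))
              - (∑ j, A' i j * sig (B'.mulVec (p + s • v) j)))
            = fun s : ℝ =>
              (∑ j, A i j * sig (B.mulVec p j + s * B.mulVec v j))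
                - (∑ j, A' i j * sig (B'.mulVec p j + s * B'.mulVec v j)) := by
          funext s
          simp [Matrix.mulVec_add, Matrix.mulVec_smul]
        rw [hfun]
        exact (analytic_aux _ _ _).sub (analytic_aux _ _ _))
      (interior S₁) isOpen_interior a ha (fun x hx => st1 x (hsub hx) i) x
    linarith [hz]
  -- The transfer matrices
  set C := B' * B⁻¹ with hCdef
  set M := A'⁻¹ * A with hMdef
  have hCdet : IsUnit C.det := by
    rw [hCdef, Matrix.det_mul]
    exact hB'.mul (B.isUnit_nonsing_inv_det hB)
  have vecH : ∀ u : Fin n → ℝ,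
      (fun i => sig (C.mulVec u i)) = M.mulVec (fun j => sig (u j)) := by
    intro u
    have hB'u : B'.mulVec (B⁻¹.mulVec u) = C.mulVec u := by
      rw [Matrix.mulVec_mulVec]
    have hv : A.mulVec (fun j => sig (u j)) = A'.mulVec (fun j => sig (C.mulVec u j)) := by
      funext i
      have h := g1 (B⁻¹.mulVec u) i
      rw [hBinv, hB'u] at h
      simpa only [Matrix.mulVec, dotProduct] using h
    have := congrArg (fun z => A'⁻¹.mulVec z) hv
    rw [Matrix.mulVec_mulVec, Matrix.mulVec_mulVec, Matrix.nonsing_inv_mul _ hA',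
      Matrix.one_mulVec] at this
    exact this.symm
  have rowH : ∀ (i : Fin n) (u : Fin n → ℝ),
      sig (∑ j, C i j * u j) = ∑ j, M i j * sig (u j) := by
    intro i u
    have := congrFun (vecH u) i
    simpa only [Matrix.mulVec, dotProduct] using this
  have hcne : ∀ i, ∃ j, C i j ≠ 0 := by
    intro i
    by_contra h
    push_neg at h
    exact hCdet.ne_zero (Matrix.det_eq_zero_of_row_eq_zero i h)
  choose ρ hρC hρM using fun i => row_lemma (C i) (M i) (rowH i) (hcne i)
  have hinj : Function.Injective ρ := by
    intro i i' h
    by_contra hne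
    apply hCdet.ne_zero
    apply Matrix.det_zero_of_row_eq hne
    funext j
    rw [hρC i j, hρC i' j, h]
  let e : Equiv.Perm (Fin n) := Equiv.ofBijective ρ (Finite.injective_iff_bijective.mp hinj)
  have he : ∀ i, e i = ρ i := fun i => rfl
  have hC : C = pmat e := by
    ext i j
    rw [hρC i j]
    simp [pmat, he]
  have hM : M = pmat e := by
    ext i j
    rw [hρM i j]
    simp [pmat, he]
  -- matrix identities from stage 1
  have hB'eq : B' = pmat e * B := by
    rw [← hC, hCdef, Matrix.mul_assoc, Matrix.nonsing_inv_mul _ hB, Matrix.mul_one]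
  have hAeq : A = A' * pmat e := by
    rw [← hM, hMdef, ← Matrix.mul_assoc, Matrix.mul_nonsing_inv _ hA', Matrix.one_mul]
  have hA'eq : A' = A * pmat e.symm := by
    rw [hAeq, Matrix.mul_assoc, pmat_mul_symm, Matrix.mul_one]
  -- Stage 2
  set D := pmat e * Λ - Λ' * pmat e with hDdef
  have hproj : ∀ x₁ ∈ S₁, ∃ x₂, (x₁, x₂) ∈ S₂ := by
    intro x₁ hx₁
    rw [← hS₂proj] at hx₁
    obtain ⟨p, hp, hpe⟩ := hx₁
    exact ⟨p.2, by rw [← hpe]; simpa using hp⟩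
  have st2 : ∀ x₁ ∈ S₁, ∀ i : Fin n, ∑ j, D i j * sig (B.mulVec x₁ j) = 0 := by
    intro x₁ hx₁ i
    obtain ⟨x₂, hx₂⟩ := hproj x₁ hx₁
    have h := h2 (x₁, x₂) hx₂
    unfold rnnY at h
    rw [rnnH_two, rnnH_two] at h
    set w := fun k => sig (B.mulVec x₁ k) with hw
    set v := B.mulVec x₂ with hv
    have hw' : (fun k => sig (B'.mulVec x₁ k)) = (pmat e).mulVec w := by
      funext k
      rw [hB'eq, ← Matrix.mulVec_mulVec, pmat_mulVec, pmat_mulVec]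
    have hv' : B'.mulVec x₂ = (pmat e).mulVec v := by
      rw [hB'eq, ← Matrix.mulVec_mulVec]
    -- vectors of outputs are equal, strip the outer sigmoid
    have hvec : A.mulVec (fun k => sig ((Λ.mulVec w + v) k))
        = A'.mulVec (fun k => sig ((Λ'.mulVec ((pmat e).mulVec w) + (pmat e).mulVec v) k)) := by
      funext k
      have hk := congrFun h k
      rw [hw', hv'] at hk
      exact sig_injective hk
    -- apply A'⁻¹
    have hvec2 : (pmat e).mulVec (fun k => sig ((Λ.mulVec w + v) k))
        = fun k => sig ((Λ'.mulVec ((pmat e).mulVec w) + (pmat e).mulVec v) k) := by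
      have := congrArg (fun z => A'⁻¹.mulVec z) hvec
      rw [Matrix.mulVec_mulVec, Matrix.mulVec_mulVec, Matrix.nonsing_inv_mul _ hA',
        Matrix.one_mulVec, ← hMdef, hM] at this
      exact this
    have hi := congrFun hvec2 i
    rw [pmat_mulVec] at hi
    have hi2 : (Λ.mulVec w + v) (e i) = Λ'.mulVec ((pmat e).mulVec w) i + (pmat e).mulVec v i :=
      sig_injective hi
    rw [pmat_mulVec] at hi2
    have hkey : (pmat e * Λ).mulVec w i = (Λ' * pmat e).mulVec w i := by
      rw [← Matrix.mulVec_mulVec, ← Matrix.mulVec_mulVec, pmat_mulVec]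
      have := hi2
      simp only [Pi.add_apply] at this
      linarith [this]
    have : D.mulVec w i = 0 := by
      rw [hDdef, Matrix.sub_mulVec]
      simp only [Pi.sub_apply]
      rw [hkey]
      ring
    simpa only [Matrix.mulVec, dotProduct, hw] using this
  have g2 : ∀ (x : Fin n → ℝ) (i : Fin n), ∑ j, D i j * sig (B.mulVec x j) = 0 := by
    intro x i
    exact extend_zero
      (fun x => ∑ j, D i j * sig (B.mulVec x j))
      (by
        intro p v
        have hfun : (fun s : ℝ => ∑ j, D i j * sig (B.mulVec (p + s • v) j))
            = fun s : ℝ => ∑ j, D i j * sig (B.mulVec p j + s * B.mulVec v j) := by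
          funext s
          simp [Matrix.mulVec_add, Matrix.mulVec_smul]
        rw [hfun]
        exact analytic_aux _ _ _)
      (interior S₁) isOpen_interior a ha (fun x hx => st2 x (hsub hx) i) x
  have hD0 : D = 0 := by
    ext i j
    have hu : ∀ u : Fin n → ℝ, ∑ k, D i k * sig (u k) = 0 := by
      intro u
      have := g2 (B⁻¹.mulVec u) i
      rwa [hBinv] at this
    have h0 := hu 0
    simp only [Pi.zero_apply, sig_zero] at h0
    rw [← Finset.sum_mul] at h0
    have hs := hu (fun k => if k = j then 1 else 0)
    have hsplit : ∀ k, D i k * sig (if k = j then 1 else 0)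
        = D i k * (1/2) + (if k = j then D i j * (sig 1 - 1/2) else 0) := by
      intro k
      by_cases hk : k = j
      · subst hk; simp [sig_zero]; ring
      · simp [hk, sig_zero]
    rw [Finset.sum_congr rfl (fun k _ => hsplit k), Finset.sum_add_distrib,
      ← Finset.sum_mul, Finset.sum_ite_eq' _ _ _] at hs
    simp only [Finset.mem_univ, if_true] at hs
    rw [h0, zero_add] at hs
    have hne : sig 1 - 1/2 ≠ 0 := sub_ne_zero.mpr sig_one_ne_half
    have := (mul_eq_zero.mp hs).resolve_right hne
    simpa using this
  have hΛ'eq : Λ' = pmat e * Λ * pmat e.symm := by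
    have heq : pmat e * Λ = Λ' * pmat e := by
      have := sub_eq_zero.mp hD0
      exact this
    rw [heq, Matrix.mul_assoc, pmat_mul_symm, Matrix.mul_one]
  have hHrel : ∀ (t : ℕ) (x : Fin t → Fin n → ℝ),
      rnnH Λ' B' t x = (pmat e).mulVec (rnnH Λ B t x) := by
    intro t x
    have := rnnH_perm Λ B e t x
    rwa [← hΛ'eq, ← hB'eq] at this
  refine ⟨pmat e.symm, isPermMatrix_pmat _, hA'eq, ?_, ?_, ?_, ?_⟩
  · rw [pmat_transpose, Equiv.symm_symm]
    exact hB'eq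
  · rw [pmat_transpose, Equiv.symm_symm]
    exact hΛ'eq
  · intro t _ x
    rw [hHrel t x, Matrix.mulVec_mulVec, pmat_symm_mul, Matrix.one_mulVec]
  · intro t _ x
    funext i
    simp only [rnnY]
    rw [hHrel t x, Matrix.mulVec_mulVec, hA'eq, Matrix.mul_assoc, pmat_symm_mul,
      Matrix.mul_one]
end

section
/- Let σ(s) = 1/(1 + e^{−s}). Suppose u, v ∈ ℝ with u ≠ 0 and v ≠ 0, and σ(v y) = u σ(y) for every y in a nonempty open interval I ⊆ ℝ. Then u = 1 and v = 1. -/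
private lemma hasDerivAt_aux (u v y : ℝ) :
    HasDerivAt (fun y : ℝ => 1 + Real.exp (-y) - u * (1 + Real.exp (-(v * y))))
      (-Real.exp (-y) + u * v * Real.exp (-(v * y))) y := by
  have h1 : HasDerivAt (fun y : ℝ => Real.exp (-y)) (-Real.exp (-y)) y := by
    simpa [Function.comp_def] using (Real.hasDerivAt_exp (-y)).comp y ((hasDerivAt_id y).neg)
  have h2 : HasDerivAt (fun y : ℝ => Real.exp (-(v * y))) (-v * Real.exp (-(v * y))) y := by
    have := (Real.hasDerivAt_exp (-(v * y))).comp y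
      (((hasDerivAt_id y).const_mul v).neg)
    simpa [mul_comm, Function.comp_def] using this
  have := ((hasDerivAt_const y (1 : ℝ)).add h1).sub
    (((hasDerivAt_const y (1 : ℝ)).add h2).const_mul u)
  exact this.congr_deriv (by ring)

private lemma hasDerivAt_aux2 (u v y : ℝ) :
    HasDerivAt (fun y : ℝ => -Real.exp (-y) + u * v * Real.exp (-(v * y)))
      (Real.exp (-y) + u * v * (-v * Real.exp (-(v * y)))) y := by
  have h1 : HasDerivAt (fun y : ℝ => Real.exp (-y)) (-Real.exp (-y)) y := by
    simpa [Function.comp_def] using (Real.hasDerivAt_exp (-y)).comp y ((hasDerivAt_id y).neg)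
  have h2 : HasDerivAt (fun y : ℝ => Real.exp (-(v * y))) (-v * Real.exp (-(v * y))) y := by
    have := (Real.hasDerivAt_exp (-(v * y))).comp y
      (((hasDerivAt_id y).const_mul v).neg)
    simpa [mul_comm, Function.comp_def] using this
  have := h1.neg.add (h2.const_mul (u * v))
  exact this.congr_deriv (by ring)

/-- **Scalar case in the proof of Theorem 6.** If `u, v ≠ 0` and `σ(v y) = u σ(y)` for every
`y` in a nonempty open interval, then `u = 1` and `v = 1`. -/
theorem stmt_9 (u v : ℝ) (hu : u ≠ 0) (hv : v ≠ 0)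
    (a b : ℝ) (hab : a < b)
    (h : ∀ y ∈ Set.Ioo a b, sig (v * y) = u * sig y) :
    u = 1 ∧ v = 1 := by
  set F : ℝ → ℝ := fun y => 1 + Real.exp (-y) - u * (1 + Real.exp (-(v * y))) with hF
  set F' : ℝ → ℝ := fun y => -Real.exp (-y) + u * v * Real.exp (-(v * y)) with hF'
  have hdF : deriv F = F' := by
    funext y; exact (hasDerivAt_aux u v y).deriv
  have hdF' : ∀ y, deriv F' y = Real.exp (-y) + u * v * (-v * Real.exp (-(v * y))) := by
    intro y; exact (hasDerivAt_aux2 u v y).deriv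
  -- F vanishes on the interval
  have hFz : ∀ y ∈ Set.Ioo a b, F y = 0 := by
    intro y hy
    have hs := h y hy
    have hp1 : (0:ℝ) < 1 + Real.exp (-(v * y)) := by positivity
    have hp2 : (0:ℝ) < 1 + Real.exp (-y) := by positivity
    simp only [sig] at hs
    have : 1 + Real.exp (-y) = u * (1 + Real.exp (-(v * y))) := by
      field_simp at hs
      linarith [hs]
    simp [hF, this]
  set c : ℝ := (a + b) / 2 with hc
  have hcmem : c ∈ Set.Ioo a b := by constructor <;> simp [hc] <;> linarith
  have hnhds : Set.Ioo a b ∈ nhds c := (isOpen_Ioo).mem_nhds hcmem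
  have hev : F =ᶠ[nhds c] (fun _ => (0:ℝ)) :=
    Filter.eventuallyEq_of_mem hnhds hFz
  have hev' : F' =ᶠ[nhds c] (fun _ => (0:ℝ)) := by
    have := hev.deriv
    rw [hdF] at this
    simpa using this
  have h1 : F' c = 0 := hev'.eq_of_nhds
  have h2 : deriv F' c = deriv (fun _ : ℝ => (0:ℝ)) c := hev'.deriv_eq
  rw [hdF'] at h2
  simp only [deriv_const'] at h2
  -- algebra
  have e1 : Real.exp (-c) = u * v * Real.exp (-(v * c)) := by
    simp only [hF'] at h1; linarith
  have e2 : Real.exp (-c) = u * v * (v * Real.exp (-(v * c))) := by nlinarith [h2]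
  have hex : (0:ℝ) < Real.exp (-(v * c)) := Real.exp_pos _
  have hv1 : v = 1 := by
    have : u * v * Real.exp (-(v * c)) = u * v * (v * Real.exp (-(v * c))) := by
      rw [← e1, ← e2]
    have huv : u * v * Real.exp (-(v * c)) ≠ 0 := by
      rw [← e1]; exact (Real.exp_pos _).ne'
    have h3 : (u * v * Real.exp (-(v * c))) * (1 - v) = 0 := by linear_combination this
    rcases mul_eq_zero.mp h3 with h4 | h4
    · exact absurd h4 huv
    · linarith
  have hu1 : u = 1 := by
    rw [hv1] at e1
    have := Real.exp_pos (-c)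
    have h1c : Real.exp (-(1 * c)) = Real.exp (-c) := by norm_num
    rw [h1c] at e1
    field_simp at e1
    linarith
  exact ⟨hu1, hv1⟩
end

section
/- Let Θ ⊆ ℝ^p be a parameter set and, for each t ≥ 1, let h_t(·; θ) : (ℝ^n)^t → ℝ^m (θ ∈ Θ) be measurable maps satisfying uniform Lipschitzness in the parameters: ‖h_t(x_{≤t}; θ) − h_t(x_{≤t}; θ')‖ ≤ L ‖θ − θ'‖ for all t ≥ 1, all x_{≤t} ∈ (ℝ^n)^t, and all θ, θ' ∈ Θ. Let θ* ∈ Θ (realizability: the labeling function is f_t = h_t(·; θ*)). Fix ε > 0 and let Θ_c ⊆ Θ be a finite η-cover of Θ (every θ ∈ Θ is within distance η of some element of Θ_c) with η ≤ ε / L. For each t ≥ 1 let μ_t be a probability measure on (ℝ^n)^t and define R̃(θ, t) = ∫ ‖h_t(x_{≤t}; θ) − h_t(x_{≤t}; θ*)‖ dμ_t(x_{≤t}). Then there exists a finite T₀ such that for every T > T₀: (a) the constraint set {θ ∈ Θ_c : R̃(θ, t) ≤ ε for all 1 ≤ t ≤ T} is nonempty, and (b) every θ in this set satisfies R̃(θ,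 t) ≤ ε for all t ≥ 1 (approximate length generalization at all lengths). -/
open MeasureTheory

/-- **Theorem 8 (constrained learner over an η-cover, infinite hypothesis classes).**
The hypothesis class `{h t θ : θ ∈ Θ}` is uniformly `L`-Lipschitz in the parameters over all
sequence lengths and inputs; the labeling function is realizable as `h t θ*`. For a finite
`η`-cover `Θ_c` of `Θ` with `η ≤ ε / L`, and probability measures `μ t` on length-`t`
sequences defining `R̃(θ, t) = ∫ ‖h t θ x − h t θ* x‖ dμ_t`, there is a finite `T₀` such that
for all `T > T₀`: (a) the constraint set `{θ ∈ Θ_c : R̃(θ, t) ≤ ε for 1 ≤ t ≤ T}` is nonempty,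
and (b) every member of it satisfies `R̃(θ, t) ≤ ε` for all `t ≥ 1`. -/
theorem stmt_14 {p n m : ℕ}
    (Θ : Set (EuclideanSpace ℝ (Fin p)))
    (h : (t : ℕ) → EuclideanSpace ℝ (Fin p) →
      (Fin t → EuclideanSpace ℝ (Fin n)) → EuclideanSpace ℝ (Fin m))
    (hmeas : ∀ t θ, Measurable (h t θ))
    (L : ℝ) (hL : 0 < L)
    (hLip : ∀ t : ℕ, 1 ≤ t → ∀ x : Fin t → EuclideanSpace ℝ (Fin n),
      ∀ θ ∈ Θ, ∀ θ' ∈ Θ, ‖h t θ x - h t θ' x‖ ≤ L * ‖θ - θ'‖)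
    (θstar : EuclideanSpace ℝ (Fin p)) (hθstar : θstar ∈ Θ)
    (ε : ℝ) (hε : 0 < ε)
    (Θc : Finset (EuclideanSpace ℝ (Fin p))) (hΘcsub : ↑Θc ⊆ Θ)
    (η : ℝ) (hη : η ≤ ε / L)
    (hcover : ∀ θ ∈ Θ, ∃ θc ∈ Θc, ‖θ - θc‖ ≤ η)
    (μ : (t : ℕ) → Measure (Fin t → EuclideanSpace ℝ (Fin n)))
    (hμ : ∀ t, IsProbabilityMeasure (μ t)) :
    ∃ T₀ : ℕ, ∀ T : ℕ, T > T₀ →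
      (∃ θ ∈ Θc, ∀ t : ℕ, 1 ≤ t → t ≤ T →
        (∫ x, ‖h t θ x - h t θstar x‖ ∂(μ t)) ≤ ε) ∧
      (∀ θ ∈ Θc, (∀ t : ℕ, 1 ≤ t → t ≤ T →
          (∫ x, ‖h t θ x - h t θstar x‖ ∂(μ t)) ≤ ε) →
        ∀ t : ℕ, 1 ≤ t → (∫ x, ‖h t θ x - h t θstar x‖ ∂(μ t)) ≤ ε) := by
  classical
  set R : EuclideanSpace ℝ (Fin p) → ℕ → ℝ :=
    fun θ t => ∫ x, ‖h t θ x - h t θstar x‖ ∂(μ t) with hR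
  -- the good element of the cover
  obtain ⟨θc, hθcΘc, hθcnear⟩ := hcover θstar hθstar
  have hθcΘ : θc ∈ Θ := hΘcsub hθcΘc
  have hgood : ∀ t : ℕ, 1 ≤ t → R θc t ≤ ε := by
    intro t ht
    have hle : ∀ x, ‖h t θc x - h t θstar x‖ ≤ L * η := by
      intro x
      have := hLip t ht x θc hθcΘ θstar hθstar
      have h2 : ‖θc - θstar‖ ≤ η := by rwa [norm_sub_rev]
      exact this.trans (by nlinarith)
    have := hμ t
    calc R θc t ≤ ∫ _x, L * η ∂(μ t) := by
          apply integral_mono_of_nonneg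
          · exact Filter.Eventually.of_forall fun x => norm_nonneg _
          · exact integrable_const _
          · exact Filter.Eventually.of_forall hle
      _ = L * η := by simp
      _ ≤ ε := by
          have := mul_le_mul_of_nonneg_left hη hL.le
          rwa [mul_div_cancel₀ ε hL.ne'] at this
  -- witness function for bad parameters
  have hf : ∀ θ : EuclideanSpace ℝ (Fin p),
      ∃ f : ℕ, (∃ t, 1 ≤ t ∧ ε < R θ t) → (1 ≤ f ∧ ε < R θ f) := by
    intro θ
    by_cases hθ : ∃ t, 1 ≤ t ∧ ε < R θ t
    · obtain ⟨t, ht⟩ := hθ; exact ⟨t, fun _ => ht⟩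
    · exact ⟨0, fun hc => absurd hc hθ⟩
  choose f hfspec using hf
  refine ⟨Θc.sup f, fun T hT => ⟨⟨θc, hθcΘc, fun t ht _ => hgood t ht⟩, ?_⟩⟩
  intro θ hθΘc hcons t ht
  by_contra hbad
  push_neg at hbad
  have hex : ∃ t, 1 ≤ t ∧ ε < R θ t := ⟨t, ht, hbad⟩
  obtain ⟨h1, h2⟩ := hfspec θ hex
  have hfle : f θ ≤ T := le_trans (Finset.le_sup hθΘc) hT.le
  exact absurd (hcons (f θ) h1 hfle) (not_le.mpr h2)
end

section
/- Fix n, m ≥ 1, T_max ≥ 2, T ≥ max(T_max, 3), and a token-support set D ⊆ ℝ^n. Let ω, ρ : ℝ^m → ℝ^m be C¹-diffeomorphisms with ω(0) = 0 and ρ(0) = 0, and for each integer r ≥ 1 let ψ_r, φ_r : ℝ^n × ℝ^n → ℝ^m be continuous with ψ_r = 0 and φ_r = 0 for all r ≥ T_max; assume additionally that for every r ≤ T_max − 1 and every x ∈ D there exists y ∈ D with φ_r(x, y) = 0. For t ≥ 2 define h_t(x_{≤t}) = ω((1/(t−1)) Σ_{j=1}^{t−1} ψ_{t−j}(x_t,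 x_j)) and f_t(x_{≤t}) = ρ((1/(t−1)) Σ_{j=1}^{t−1} φ_{t−j}(x_t, x_j)). Suppose h_t = f_t on D^t for every 2 ≤ t ≤ T, and {(φ₁(x, y), φ₂(x, z)) : x, y, z ∈ D} = ℝ^m × ℝ^m. Then a := ω^{-1} ∘ ρ is an invertible linear map: there is an invertible A ∈ ℝ^{m×m} with ψ_r(x, y) = A φ_r(x, y) for all 1 ≤ r ≤ T_max − 1 and x, y ∈ D, and ω(z) = ρ(A^{-1} z) for all z ∈ ℝ^m; consequently h_t = f_t on D^t for every t ≥ 2 (length generalization). -/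
/-- One-block causal transformer with relative positional encodings attending over the context
excluding the current token, with `C¹`-diffeomorphism output map: on a sequence of length
`t + 2` (so lengths range over all `t ≥ 2`) it computes
`ω((1/(t+1)) ∑_{j<t+1} ψ_{(t+1−j)}(x_last, x_j))`. -/
noncomputable def relTxOutD {n m : ℕ} (ω : (Fin m → ℝ) → (Fin m → ℝ))
    (ψ : ℕ → (Fin n → ℝ) → (Fin n → ℝ) → (Fin m → ℝ))
    (t : ℕ) (x : Fin (t + 2) → Fin n → ℝ) : Fin m → ℝ :=
  ω (((t : ℝ) + 1)⁻¹ •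
    ∑ j : Fin (t + 1), ψ (t + 1 - (j : ℕ)) (x (Fin.last (t + 1))) (x j.castSucc))

/-- **Theorem 10 (transformers with relative positional encodings,
`C¹`-diffeomorphism output).**  Attention maps vanish for relative positions `r ≥ T_max`, and
for every `1 ≤ r ≤ T_max − 1` and `x ∈ D` some `y ∈ D` has `φ_r(x, y) = 0`.  If the learned and
labeling transformers agree on `D^t` for every `2 ≤ t ≤ T` and
`{(φ₁(x,y), φ₂(x,z)) : x, y, z ∈ D} = ℝᵐ × ℝᵐ`, then `a = ω⁻¹ ∘ ρ` is an invertible linear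
map: there is an invertible matrix `A` with `ψ_r = A φ_r` on `D × D` for `1 ≤ r ≤ T_max − 1`
and `ω(z) = ρ(A⁻¹ z)`; consequently the models agree on `D^t` for every `t ≥ 2`
(length generalization). -/
theorem stmt_16 {n m T Tmax : ℕ} (hn : 1 ≤ n) (hm : 1 ≤ m)
    (hTmax : 2 ≤ Tmax) (hT : Tmax ≤ T) (hT3 : 3 ≤ T)
    (D : Set (Fin n → ℝ))
    (ω ρ ωinv ρinv : (Fin m → ℝ) → (Fin m → ℝ))
    (hω : ContDiff ℝ 1 ω) (hωinv : ContDiff ℝ 1 ωinv)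
    (hωli : Function.LeftInverse ωinv ω) (hωri : Function.RightInverse ωinv ω)
    (hρ : ContDiff ℝ 1 ρ) (hρinv : ContDiff ℝ 1 ρinv)
    (hρli : Function.LeftInverse ρinv ρ) (hρri : Function.RightInverse ρinv ρ)
    (hω0 : ω 0 = 0) (hρ0 : ρ 0 = 0)
    (ψ φ : ℕ → (Fin n → ℝ) → (Fin n → ℝ) → (Fin m → ℝ))
    (hψ : ∀ r, Continuous (fun p : (Fin n → ℝ) × (Fin n → ℝ) => ψ r p.1 p.2))
    (hφ : ∀ r, Continuous (fun p : (Fin n → ℝ) × (Fin n → ℝ) => φ r p.1 p.2))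
    (hψvan : ∀ r : ℕ, Tmax ≤ r → ∀ x y : Fin n → ℝ, ψ r x y = 0)
    (hφvan : ∀ r : ℕ, Tmax ≤ r → ∀ x y : Fin n → ℝ, φ r x y = 0)
    (hzero : ∀ r : ℕ, 1 ≤ r → r ≤ Tmax - 1 → ∀ x ∈ D, ∃ y ∈ D, φ r x y = 0)
    (htrain : ∀ t : ℕ, t + 2 ≤ T → ∀ x : Fin (t + 2) → Fin n → ℝ,
      (∀ j, x j ∈ D) → relTxOutD ω ψ t x = relTxOutD ρ φ t x)
    (hspan : (fun q : (Fin n → ℝ) × (Fin n → ℝ) × (Fin n → ℝ) =>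
        (φ 1 q.1 q.2.1, φ 2 q.1 q.2.2)) '' (D ×ˢ (D ×ˢ D)) = Set.univ) :
    ∃ A : Matrix (Fin m) (Fin m) ℝ, IsUnit A.det ∧
      (∀ r : ℕ, 1 ≤ r → r ≤ Tmax - 1 → ∀ x ∈ D, ∀ y ∈ D,
        ψ r x y = A.mulVec (φ r x y)) ∧
      (∀ z : Fin m → ℝ, ω z = ρ (A⁻¹.mulVec z)) ∧
      (∀ t : ℕ, ∀ x : Fin (t + 2) → Fin n → ℝ, (∀ j, x j ∈ D) →
        relTxOutD ω ψ t x = relTxOutD ρ φ t x) := by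
  classical
  -- the map a = ωinv ∘ ρ and its inverse
  set a : (Fin m → ℝ) → (Fin m → ℝ) := fun u => ωinv (ρ u) with haDef
  set ainv : (Fin m → ℝ) → (Fin m → ℝ) := fun u => ρinv (ω u) with hainvDef
  have hali : ∀ u, ainv (a u) = u := by
    intro u; simp only [haDef, hainvDef]; rw [hωri, hρli]
  have hari : ∀ u, a (ainv u) = u := by
    intro u; simp only [haDef, hainvDef]; rw [hρri, hωli]
  have ha0 : a 0 = 0 := by
    simp only [haDef]
    rw [hρ0]
    have h := hωli 0
    rwa [hω0] at h
  -- D is nonempty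
  have hDne : D.Nonempty := by
    have h0 : ((0, 0) : (Fin m → ℝ) × ((Fin m → ℝ))) ∈
        ((fun q : (Fin n → ℝ) × (Fin n → ℝ) × (Fin n → ℝ) =>
          (φ 1 q.1 q.2.1, φ 2 q.1 q.2.2)) '' (D ×ˢ (D ×ˢ D))) := by
      rw [hspan]; trivial
    obtain ⟨q, hq, -⟩ := h0
    exact ⟨q.1, hq.1⟩
  -- zeros exist for all r ≥ 1
  have hz1 : ∀ r : ℕ, 1 ≤ r → ∀ x ∈ D, ∃ y ∈ D, φ r x y = 0 := by
    intro r hr x hx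
    by_cases h : r ≤ Tmax - 1
    · exact hzero r hr h x hx
    · obtain ⟨y, hy⟩ := hDne
      exact ⟨y, hy, hφvan r (by omega) x y⟩
  -- training identities in terms of a
  have key : ∀ t : ℕ, t + 2 ≤ T → ∀ x : Fin (t + 2) → Fin n → ℝ, (∀ j, x j ∈ D) →
      ((t : ℝ) + 1)⁻¹ • ∑ j : Fin (t + 1), ψ (t + 1 - (j : ℕ)) (x (Fin.last (t + 1))) (x j.castSucc)
      = a (((t : ℝ) + 1)⁻¹ •
          ∑ j : Fin (t + 1), φ (t + 1 - (j : ℕ)) (x (Fin.last (t + 1))) (x j.castSucc)) := by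
    intro t ht x hxD
    have h := htrain t ht x hxD
    unfold relTxOutD at h
    have h2 := congrArg ωinv h
    rw [hωli] at h2
    exact h2
  -- length-2 identity : ψ 1 = a ∘ φ 1 on D × D
  have hpsi1 : ∀ x ∈ D, ∀ y ∈ D, ψ 1 x y = a (φ 1 x y) := by
    intro x hx y hy
    have h := key 0 (by omega) ![y, x] (by intro j; fin_cases j <;> assumption)
    simpa using h
  -- length-3 identity
  have key3 : ∀ x ∈ D, ∀ y ∈ D, ∀ z ∈ D,
      (2 : ℝ)⁻¹ • (ψ 2 x y + ψ 1 x z) = a ((2 : ℝ)⁻¹ • (φ 2 x y + φ 1 x z)) := by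
    intro x hx y hy z hzz
    have h := key 1 (by omega) ![y, z, x] (by intro j; fin_cases j <;> assumption)
    have hl : ![y, z, x] (Fin.last 2) = x := rfl
    have e : ((1 : ℕ) : ℝ) + 1 = 2 := by norm_num
    rw [e, hl] at h
    simpa using h
  have hpsi2 : ∀ x ∈ D, ∀ y ∈ D, ψ 2 x y = (2 : ℝ) • a ((2 : ℝ)⁻¹ • φ 2 x y) := by
    intro x hx y hy
    obtain ⟨z, hzD, hz0⟩ := hz1 1 le_rfl x hx
    have h := key3 x hx y hy z hzD
    rw [hpsi1 x hx z hzD, hz0, ha0, add_zero, add_zero] at h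
    rw [← h, smul_smul]
    norm_num
  -- coverage of ℝ^m × ℝ^m
  have hcover : ∀ u v : Fin m → ℝ, ∃ x ∈ D, ∃ y ∈ D, ∃ z ∈ D,
      φ 1 x y = u ∧ φ 2 x z = v := by
    intro u v
    have h0 : ((u, v) : (Fin m → ℝ) × (Fin m → ℝ)) ∈
        ((fun q : (Fin n → ℝ) × (Fin n → ℝ) × (Fin n → ℝ) =>
          (φ 1 q.1 q.2.1, φ 2 q.1 q.2.2)) '' (D ×ˢ (D ×ˢ D))) := by
      rw [hspan]; trivial
    obtain ⟨⟨x, y, z⟩, hq, heq⟩ := h0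
    exact ⟨x, hq.1, y, hq.2.1, z, hq.2.2, congrArg Prod.fst heq, congrArg Prod.snd heq⟩
  -- functional equation
  have hF : ∀ u v : Fin m → ℝ,
      a ((2 : ℝ)⁻¹ • (v + u)) = a ((2 : ℝ)⁻¹ • v) + (2 : ℝ)⁻¹ • a u := by
    intro u v
    obtain ⟨x, hx, y, hy, z, hzD, h1, h2⟩ := hcover u v
    have h := key3 x hx z hzD y hy
    rw [hpsi1 x hx y hy, hpsi2 x hx z hzD, h1, h2, smul_add, smul_smul] at h
    rw [← h]
    norm_num
  have hhalf : ∀ u : Fin m → ℝ, a ((2 : ℝ)⁻¹ • u) = (2 : ℝ)⁻¹ • a u := by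
    intro u
    have h := hF u 0
    rwa [zero_add, smul_zero, ha0, zero_add] at h
  have hadd : ∀ u v : Fin m → ℝ, a (u + v) = a u + a v := by
    intro u v
    have h := hF u v
    rw [hhalf, hhalf] at h
    have h2 : (2 : ℝ)⁻¹ • a (v + u) = (2 : ℝ)⁻¹ • (a v + a u) := by
      rw [h, smul_add]
    have := smul_right_injective (Fin m → ℝ) (by norm_num : (2 : ℝ)⁻¹ ≠ 0) h2
    rw [add_comm v u] at this
    rw [this, add_comm]
  -- the continuous linear map
  have hacont : Continuous a := hωinv.continuous.comp hρ.continuous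
  set f : (Fin m → ℝ) →L[ℝ] (Fin m → ℝ) :=
    AddMonoidHom.toRealLinearMap (AddMonoidHom.mk' a hadd) hacont with hfDef
  have hfa : ∀ u, f u = a u := fun u => rfl
  have hsmul : ∀ (c : ℝ) (u : Fin m → ℝ), a (c • u) = c • a u := by
    intro c u
    rw [← hfa, ← hfa, map_smul]
  -- general r identity
  have hpsir : ∀ r : ℕ, 1 ≤ r → ∀ x ∈ D, ∀ y ∈ D, ψ r x y = a (φ r x y) := by
    intro r
    induction r using Nat.strong_induction_on with
    | _ r ih =>
      intro hr x hx y hy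
      rcases le_or_gt Tmax r with hle | hlt
      · rw [hψvan r hle, hφvan r hle, ha0]
      rcases eq_or_lt_of_le hr with h1 | h1
      · rw [← h1]; exact hpsi1 x hx y hy
      -- 2 ≤ r < Tmax; use length r + 1, i.e. t = r - 1
      obtain ⟨t, rfl⟩ : ∃ t, r = t + 1 := ⟨r - 1, by omega⟩
      have ht1 : 1 ≤ t := by omega
      -- choose zeros
      have hex : ∀ s : ℕ, ∃ w, w ∈ D ∧ (1 ≤ s → φ s x w = 0) := by
        intro s
        rcases Nat.eq_zero_or_pos s with h0 | h0
        · exact ⟨hDne.choose, hDne.choose_spec, fun h => absurd h (by omega)⟩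
        · obtain ⟨w, hwD, hw0⟩ := hz1 s h0 x hx
          exact ⟨w, hwD, fun _ => hw0⟩
      choose zf hzfD hzf0 using hex
      set seq : Fin (t + 2) → Fin n → ℝ := fun i =>
        if (i : ℕ) = 0 then y else if (i : ℕ) = t + 1 then x else zf (t + 1 - (i : ℕ))
        with hseqDef
      have hseqD : ∀ j, seq j ∈ D := by
        intro j
        simp only [hseqDef]
        split_ifs
        · exact hy
        · exact hx
        · exact hzfD _
      have hlast : seq (Fin.last (t + 1)) = x := by
        simp [hseqDef, Fin.last]
      have hkey := key t (by omega) seq hseqD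
      have hterm : ∀ (g : ℕ → (Fin n → ℝ) → (Fin n → ℝ) → (Fin m → ℝ)),
          (∀ j : Fin (t + 1), (j : ℕ) ≠ 0 →
            g (t + 1 - (j : ℕ)) x (seq j.castSucc) = 0) →
          ∑ j : Fin (t + 1), g (t + 1 - (j : ℕ)) (seq (Fin.last (t + 1))) (seq j.castSucc)
            = g (t + 1) x y := by
        intro g hg
        rw [hlast]
        rw [Finset.sum_eq_single (0 : Fin (t + 1))]
        · have h0 : seq (Fin.castSucc (0 : Fin (t + 1))) = y := by
            simp [hseqDef]
          rw [h0]
          norm_num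
        · intro j _ hj
          have hjne : (j : ℕ) ≠ 0 := fun h => hj (Fin.ext h)
          exact hg j hjne
        · intro h; exact absurd (Finset.mem_univ _) h
      have hseqj : ∀ j : Fin (t + 1), (j : ℕ) ≠ 0 →
          seq j.castSucc = zf (t + 1 - (j : ℕ)) := by
        intro j hj
        have hjlt : (j : ℕ) < t + 1 := j.isLt
        simp only [hseqDef, Fin.coe_castSucc]
        rw [if_neg hj, if_neg (by omega)]
      have hs1 : ∀ j : Fin (t + 1), (j : ℕ) ≠ 0 → 1 ≤ t + 1 - (j : ℕ) := by
        intro j hj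
        have := j.isLt; omega
      have hφsum := hterm φ (by
        intro j hj
        rw [hseqj j hj]
        exact hzf0 _ (hs1 j hj))
      have hψsum := hterm ψ (by
        intro j hj
        rw [hseqj j hj]
        have hlt : t + 1 - (j : ℕ) < t + 1 := by
          have := j.isLt
          omega
        rw [ih _ hlt (hs1 j hj) x hx (zf _) (hzfD _), hzf0 _ (hs1 j hj), ha0])
      rw [hφsum, hψsum, hsmul] at hkey
      have hc : ((t : ℝ) + 1)⁻¹ ≠ 0 := by positivity
      exact smul_right_injective (Fin m → ℝ) hc hkey
  -- ainv is additive and continuous, build matrices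
  have hainvadd : ∀ u v, ainv (u + v) = ainv u + ainv v := by
    intro u v
    have : u + v = a (ainv u + ainv v) := by rw [hadd, hari, hari]
    rw [this, hali]
  have hainvcont : Continuous ainv := hρinv.continuous.comp hω.continuous
  set g : (Fin m → ℝ) →L[ℝ] (Fin m → ℝ) :=
    AddMonoidHom.toRealLinearMap (AddMonoidHom.mk' ainv hainvadd) hainvcont with hgDef
  have hga : ∀ u, g u = ainv u := fun u => rfl
  set A : Matrix (Fin m) (Fin m) ℝ := LinearMap.toMatrix' (f.toLinearMap) with hADef
  set B : Matrix (Fin m) (Fin m) ℝ := LinearMap.toMatrix' (g.toLinearMap) with hBDef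
  have hAmul : ∀ v, A.mulVec v = a v := by
    intro v
    rw [← Matrix.toLin'_apply, hADef, Matrix.toLin'_toMatrix']
    exact hfa v
  have hBmul : ∀ v, B.mulVec v = ainv v := by
    intro v
    rw [← Matrix.toLin'_apply, hBDef, Matrix.toLin'_toMatrix']
    exact hga v
  have hBA : B * A = 1 := by
    apply Matrix.toLin'.injective
    apply LinearMap.ext
    intro v
    rw [Matrix.toLin'_mul]
    simp only [LinearMap.comp_apply, Matrix.toLin'_apply, Matrix.toLin'_one, LinearMap.id_apply]
    rw [hAmul, hBmul, hali]
  have hdet : IsUnit A.det := Matrix.isUnit_det_of_left_inverse hBA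
  have hAinv : A⁻¹ = B := Matrix.inv_eq_left_inv hBA
  refine ⟨A, hdet, ?_, ?_, ?_⟩
  · intro r hr _ x hx y hy
    rw [hAmul, hpsir r hr x hx y hy]
  · intro z
    rw [hAinv, hBmul]
    simp only [hainvDef]
    rw [hρri]
  · intro t x hx
    unfold relTxOutD
    have hsum : ∑ j : Fin (t + 1), ψ (t + 1 - (j : ℕ)) (x (Fin.last (t + 1))) (x j.castSucc)
        = a (∑ j : Fin (t + 1), φ (t + 1 - (j : ℕ)) (x (Fin.last (t + 1))) (x j.castSucc)) := by
      rw [← hfa, map_sum]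
      apply Finset.sum_congr rfl
      intro j _
      rw [hfa]
      exact hpsir _ (by have := j.isLt; omega) _ (hx _) _ (hx _)
    rw [hsum, ← hsmul]
    simp only [haDef]
    exact hωri _
end

section
/- Fix n, m ≥ 1 and t ≥ 1. Let ψ, φ : ℝ^n → ℝ^m be continuously differentiable and let ω, ρ : ℝ^m → ℝ^m be functions. Suppose (i) Σ_{j=1}^t ψ(x_j) = Σ_{j=1}^t φ(x_j) for every (x₁, …, x_t) ∈ (ℝ^n)^t (the learner's intermediate embedding matches the chain-of-thought supervision); (ii) ω(Σ_{j=1}^t ψ(x_j)) = ρ(Σ_{j=1}^t φ(x_j)) for every (x₁, …, x_t) ∈ (ℝ^n)^t (the predictions match the labels); and (iii) {Σ_{j=1}^t φ(x_j) : (x₁, …, x_t) ∈ (ℝ^n)^t} = ℝ^m. Then ψ(x) = φ(x) for every x ∈ ℝ^n and ω(z) = ρ(z) for every z ∈ ℝ^m; consequently ω(Σ_{j=1}^{T̃} ψ(x_j)) = ρ(Σ_{j=1}^{T̃} φ(x_j)) for every T̃ ≥ 1 and every (x₁, …, x_{T̃}) ∈ (ℝ^n)^{T̃}, i.e., chain-of-thought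 supervision yields length generalization for deep sets of unrestricted output capacity. -/
/-- **Role of chain-of-thought data for deep sets (appendix theorem).**
If the learner's intermediate embedding matches the chain-of-thought supervision
(`∑ ψ(x_j) = ∑ φ(x_j)` on all length-`t` sequences), the predictions match the labels
(`ω(∑ ψ(x_j)) = ρ(∑ φ(x_j))`), and the true embeddings `∑ φ(x_j)` cover all of `ℝᵐ`, then
`ψ = φ`, `ω = ρ`, and hence the learned deep set agrees with the labeling function at every
length (length generalization). -/
theorem stmt_17 {n m : ℕ} (hn : 1 ≤ n) (hm : 1 ≤ m)
    (t : ℕ) (ht : 1 ≤ t)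
    (ψ φ : (Fin n → ℝ) → (Fin m → ℝ)) (hψ : ContDiff ℝ 1 ψ) (hφ : ContDiff ℝ 1 φ)
    (ω ρ : (Fin m → ℝ) → (Fin m → ℝ))
    (hcot : ∀ x : Fin t → Fin n → ℝ, ∑ j, ψ (x j) = ∑ j, φ (x j))
    (hlabel : ∀ x : Fin t → Fin n → ℝ, ω (∑ j, ψ (x j)) = ρ (∑ j, φ (x j)))
    (hspan : Set.range (fun x : Fin t → Fin n → ℝ => ∑ j, φ (x j)) = Set.univ) :
    (∀ x : Fin n → ℝ, ψ x = φ x) ∧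
    (∀ z : Fin m → ℝ, ω z = ρ z) ∧
    (∀ T' : ℕ, 1 ≤ T' → ∀ x : Fin T' → Fin n → ℝ,
      ω (∑ j, ψ (x j)) = ρ (∑ j, φ (x j))) := by
  have hpt : ∀ x : Fin n → ℝ, ψ x = φ x := by
    intro a
    have h := hcot (fun _ => a)
    simp [Finset.sum_const, Finset.card_univ] at h
    have ht' : (t : ℝ) ≠ 0 := Nat.cast_ne_zero.mpr (by omega)
    funext i
    have := congrFun h i
    simp [Pi.smul_apply] at this
    rcases this with h1 | h1
    · exact h1
    · omega
  have hωρ : ∀ z : Fin m → ℝ, ω z = ρ z := by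
    intro z
    have hz : z ∈ Set.range (fun x : Fin t → Fin n → ℝ => ∑ j, φ (x j)) := by
      rw [hspan]; trivial
    obtain ⟨x, hx⟩ := hz
    have h1 := hlabel x
    have h2 := hcot x
    simp only at hx
    rw [h2, hx] at h1
    exact h1
  refine ⟨hpt, hωρ, ?_⟩
  intro T' hT' x
  have : ∑ j, ψ (x j) = ∑ j, φ (x j) := by
    apply Finset.sum_congr rfl; intro j _; exact hpt (x j)
  rw [this, hωρ]
end

section
/- Consider the recurrent neural network h_0 = 0, h_t = σ(Λ h_{t−1} + B x_t), y_t = ω(h_t; θ_ω), where σ : ℝ^k → ℝ^k is L_σ-Lipschitz with σ(0) = 0; ‖Λ‖ ≤ Λ_sup with L_σ Λ_sup < 1; ‖B‖ ≤ B_sup; the inputs satisfy ‖x_t‖ ≤ x_sup for all t; and ω satisfies ‖ω(h; θ_ω) − ω(h; θ_ω')‖ ≤ L_ω ‖θ_ω − θ_ω'‖ for all h and ‖ω(h; θ_ω) − ω(h'; θ_ω)‖ ≤ M_ω ‖h − h'‖ for all θ_ω. Then: (i) ‖h_t‖ ≤ h_sup := L_σ B_sup x_sup / (1 − L_σ Λ_sup)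 for every t ≥ 1; and (ii) for any two parameter settings θ = (θ_ω, Λ, B) and θ' = (θ_ω', Λ', B') both satisfying the above norm bounds, the outputs on any common input sequence satisfy, for every t ≥ 1, ‖y_t − y_t'‖ ≤ L_ω ‖θ_ω − θ_ω'‖ + γ₁ ‖Λ − Λ'‖_F + γ₂ ‖B − B'‖_F ≤ √(L_ω² + γ₁² + γ₂²) · ‖θ − θ'‖, where γ₁ = M_ω L_σ² B_sup x_sup / (1 − L_σ Λ_sup)² and γ₂ = M_ω L_σ x_sup / (1 − L_σ Λ_sup), with ‖·‖ the operator norm on matrices, ‖·‖_F the Frobenius norm, and ‖θ − θ'‖² = ‖θ_ω − θ_ω'‖² + ‖Λ − Λ'‖_F² + ‖B − B'‖_F². -/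
/-- Frobenius norm of a real matrix. -/
noncomputable def frobNorm {k l : ℕ} (M : Matrix (Fin k) (Fin l) ℝ) : ℝ :=
  Real.sqrt (∑ i, ∑ j, (M i j) ^ 2)

/-- Hidden state of an RNN with activation `σ`: `h₀ = 0`, `h_t = σ(Λ h_{t−1} + B x_t)`. -/
noncomputable def rnnHidden {k n : ℕ}
    (σ : EuclideanSpace ℝ (Fin k) → EuclideanSpace ℝ (Fin k))
    (Λ : Matrix (Fin k) (Fin k) ℝ) (B : Matrix (Fin k) (Fin n) ℝ) :
    (t : ℕ) → (Fin t → EuclideanSpace ℝ (Fin n)) → EuclideanSpace ℝ (Fin k)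
  | 0, _ => 0
  | t + 1, x => σ (Matrix.toEuclideanLin Λ (rnnHidden σ Λ B t fun j => x j.castSucc)
      + Matrix.toEuclideanLin B (x (Fin.last t)))

lemma frobNorm_nonneg {k l : ℕ} (M : Matrix (Fin k) (Fin l) ℝ) : 0 ≤ frobNorm M :=
  Real.sqrt_nonneg _

lemma toEuclideanLin_coord {k l : ℕ} (M : Matrix (Fin k) (Fin l) ℝ)
    (v : EuclideanSpace ℝ (Fin l)) (i : Fin k) :
    Matrix.toEuclideanLin M v i = ∑ j, M i j * v j := by
  show dotProduct (fun j => M i j) (fun j => v j) = _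
  rw [dotProduct]

lemma toEuclideanLin_frob_bound {k l : ℕ} (M : Matrix (Fin k) (Fin l) ℝ)
    (v : EuclideanSpace ℝ (Fin l)) :
    ‖Matrix.toEuclideanLin M v‖ ≤ frobNorm M * ‖v‖ := by
  rw [EuclideanSpace.norm_eq, EuclideanSpace.norm_eq]
  simp only [Real.norm_eq_abs, sq_abs]
  rw [frobNorm, ← Real.sqrt_mul (by positivity)]
  apply Real.sqrt_le_sqrt
  rw [Finset.sum_mul]
  apply Finset.sum_le_sum
  intro i _
  rw [toEuclideanLin_coord M v i]
  exact Finset.sum_mul_sq_le_sq_mul_sq Finset.univ (fun j => M i j) (fun j => v j)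

set_option maxHeartbeats 1000000 in
/-- **Uniform Lipschitzness of contractive RNNs (Assumption 10 verification).**
With `σ` `L_σ`-Lipschitz, `σ(0) = 0`, `‖Λ‖, ‖Λ'‖ ≤ Λ_sup` (operator norm bounds),
`‖B‖, ‖B'‖ ≤ B_sup`, `L_σ Λ_sup < 1`, bounded inputs `‖x_t‖ ≤ x_sup`, and a readout `ω` that is
`L_ω`-Lipschitz in its parameters and `M_ω`-Lipschitz in the hidden state:
(i) `‖h_t‖ ≤ L_σ B_sup x_sup / (1 − L_σ Λ_sup)` for every `t ≥ 1`, and (ii) the outputs of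
the two RNNs `(θ_ω, Λ, B)` and `(θ_ω', Λ', B')` on a common input sequence differ by at most
`L_ω ‖θ_ω − θ_ω'‖ + γ₁ ‖Λ − Λ'‖_F + γ₂ ‖B − B'‖_F`, which is itself at most
`√(L_ω² + γ₁² + γ₂²) · √(‖θ_ω − θ_ω'‖² + ‖Λ − Λ'‖_F² + ‖B − B'‖_F²)`, where
`γ₁ = M_ω L_σ² B_sup x_sup / (1 − L_σ Λ_sup)²` and `γ₂ = M_ω L_σ x_sup / (1 − L_σ Λ_sup)`. -/
theorem stmt_19 {k n p m : ℕ}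
    (σ : EuclideanSpace ℝ (Fin k) → EuclideanSpace ℝ (Fin k))
    (Lσ : ℝ) (hLσ0 : 0 ≤ Lσ) (hσ0 : σ 0 = 0)
    (hσLip : ∀ a b : EuclideanSpace ℝ (Fin k), ‖σ a - σ b‖ ≤ Lσ * ‖a - b‖)
    (Λsup Bsup xsup : ℝ) (hΛsup0 : 0 ≤ Λsup) (hBsup0 : 0 ≤ Bsup) (hxsup0 : 0 ≤ xsup)
    (hcontr : Lσ * Λsup < 1)
    (ω : EuclideanSpace ℝ (Fin k) → EuclideanSpace ℝ (Fin p) → EuclideanSpace ℝ (Fin m))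
    (Lω Mω : ℝ) (hLω0 : 0 ≤ Lω) (hMω0 : 0 ≤ Mω)
    (hωLipParam : ∀ h : EuclideanSpace ℝ (Fin k), ∀ θω θω' : EuclideanSpace ℝ (Fin p),
      ‖ω h θω - ω h θω'‖ ≤ Lω * ‖θω - θω'‖)
    (hωLipInput : ∀ h h' : EuclideanSpace ℝ (Fin k), ∀ θω : EuclideanSpace ℝ (Fin p),
      ‖ω h θω - ω h' θω‖ ≤ Mω * ‖h - h'‖)
    (Λ Λ' : Matrix (Fin k) (Fin k) ℝ) (B B' : Matrix (Fin k) (Fin n) ℝ)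
    (θω θω' : EuclideanSpace ℝ (Fin p))
    (hΛ : ∀ v, ‖Matrix.toEuclideanLin Λ v‖ ≤ Λsup * ‖v‖)
    (hΛ' : ∀ v, ‖Matrix.toEuclideanLin Λ' v‖ ≤ Λsup * ‖v‖)
    (hB : ∀ v, ‖Matrix.toEuclideanLin B v‖ ≤ Bsup * ‖v‖)
    (hB' : ∀ v, ‖Matrix.toEuclideanLin B' v‖ ≤ Bsup * ‖v‖)
    (t : ℕ) (ht : 1 ≤ t)
    (x : Fin t → EuclideanSpace ℝ (Fin n)) (hx : ∀ j, ‖x j‖ ≤ xsup) :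
    ‖rnnHidden σ Λ B t x‖ ≤ Lσ * Bsup * xsup / (1 - Lσ * Λsup) ∧
    ‖ω (rnnHidden σ Λ B t x) θω - ω (rnnHidden σ Λ' B' t x) θω'‖ ≤
        Lω * ‖θω - θω'‖
          + (Mω * Lσ ^ 2 * Bsup * xsup / (1 - Lσ * Λsup) ^ 2) * frobNorm (Λ - Λ')
          + (Mω * Lσ * xsup / (1 - Lσ * Λsup)) * frobNorm (B - B') ∧
    Lω * ‖θω - θω'‖
          + (Mω * Lσ ^ 2 * Bsup * xsup / (1 - Lσ * Λsup) ^ 2) * frobNorm (Λ - Λ')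
          + (Mω * Lσ * xsup / (1 - Lσ * Λsup)) * frobNorm (B - B') ≤
        Real.sqrt (Lω ^ 2 + (Mω * Lσ ^ 2 * Bsup * xsup / (1 - Lσ * Λsup) ^ 2) ^ 2
            + (Mω * Lσ * xsup / (1 - Lσ * Λsup)) ^ 2) *
          Real.sqrt (‖θω - θω'‖ ^ 2 + frobNorm (Λ - Λ') ^ 2 + frobNorm (B - B') ^ 2) := by
  have hden : (0:ℝ) < 1 - Lσ * Λsup := by linarith
  set S : ℝ := Lσ * Bsup * xsup / (1 - Lσ * Λsup) with hS
  have hS0 : 0 ≤ S := by positivity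
  have hSeq : Lσ * Λsup * S + Lσ * Bsup * xsup = S := by
    rw [hS]; field_simp; ring
  -- (i) hidden state bound, for any matrix pair satisfying the bounds
  have hbound : ∀ (Λ₀ : Matrix (Fin k) (Fin k) ℝ) (B₀ : Matrix (Fin k) (Fin n) ℝ),
      (∀ v, ‖Matrix.toEuclideanLin Λ₀ v‖ ≤ Λsup * ‖v‖) →
      (∀ v, ‖Matrix.toEuclideanLin B₀ v‖ ≤ Bsup * ‖v‖) →
      ∀ (s : ℕ) (y : Fin s → EuclideanSpace ℝ (Fin n)), (∀ j, ‖y j‖ ≤ xsup) →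
      ‖rnnHidden σ Λ₀ B₀ s y‖ ≤ S := by
    intro Λ₀ B₀ hΛ₀ hB₀ s
    induction s with
    | zero => intro y _; simp [rnnHidden, hS0]
    | succ s ih =>
      intro y hy
      have hprev := ih (fun j => y j.castSucc) (fun j => hy _)
      set h := rnnHidden σ Λ₀ B₀ s (fun j => y j.castSucc)
      have h1 : ‖rnnHidden σ Λ₀ B₀ (s+1) y‖ ≤
          Lσ * ‖Matrix.toEuclideanLin Λ₀ h + Matrix.toEuclideanLin B₀ (y (Fin.last s))‖ := by
        calc ‖rnnHidden σ Λ₀ B₀ (s+1) y‖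
            = ‖σ (Matrix.toEuclideanLin Λ₀ h + Matrix.toEuclideanLin B₀ (y (Fin.last s))) - σ 0‖ := by
              rw [hσ0, sub_zero, rnnHidden]
          _ ≤ Lσ * ‖Matrix.toEuclideanLin Λ₀ h + Matrix.toEuclideanLin B₀ (y (Fin.last s)) - 0‖ :=
              hσLip _ _
          _ = Lσ * ‖Matrix.toEuclideanLin Λ₀ h + Matrix.toEuclideanLin B₀ (y (Fin.last s))‖ := by
              rw [sub_zero]
      have h2 : ‖Matrix.toEuclideanLin Λ₀ h + Matrix.toEuclideanLin B₀ (y (Fin.last s))‖ ≤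
          Λsup * S + Bsup * xsup := by
        refine (norm_add_le _ _).trans ?_
        gcongr
        · exact (hΛ₀ h).trans (mul_le_mul_of_nonneg_left hprev hΛsup0)
        · exact (hB₀ _).trans (mul_le_mul_of_nonneg_left (hy (Fin.last s)) hBsup0)
      calc ‖rnnHidden σ Λ₀ B₀ (s+1) y‖ ≤ Lσ * (Λsup * S + Bsup * xsup) := by
            refine h1.trans ?_; gcongr
        _ = Lσ * Λsup * S + Lσ * Bsup * xsup := by ring
        _ = S := hSeq
  have hfΛ := frobNorm_nonneg (Λ - Λ')
  have hfB := frobNorm_nonneg (B - B')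
  -- (ii) hidden state difference bound
  set D : ℝ := Lσ * (frobNorm (Λ - Λ') * S + frobNorm (B - B') * xsup) / (1 - Lσ * Λsup) with hD
  have hD0 : 0 ≤ D := by positivity
  have hDeq : Lσ * Λsup * D + Lσ * (frobNorm (Λ - Λ') * S + frobNorm (B - B') * xsup) = D := by
    rw [hD]; field_simp; ring
  have hdiff : ∀ (s : ℕ) (y : Fin s → EuclideanSpace ℝ (Fin n)), (∀ j, ‖y j‖ ≤ xsup) →
      ‖rnnHidden σ Λ B s y - rnnHidden σ Λ' B' s y‖ ≤ D := by
    intro s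
    induction s with
    | zero => intro y _; simp [rnnHidden, hD0]
    | succ s ih =>
      intro y hy
      have hprev := ih (fun j => y j.castSucc) (fun j => hy _)
      set h := rnnHidden σ Λ B s (fun j => y j.castSucc)
      set h' := rnnHidden σ Λ' B' s (fun j => y j.castSucc)
      have hh' : ‖h'‖ ≤ S := hbound Λ' B' hΛ' hB' s _ (fun j => hy _)
      set u := Matrix.toEuclideanLin Λ h + Matrix.toEuclideanLin B (y (Fin.last s))
      set u' := Matrix.toEuclideanLin Λ' h' + Matrix.toEuclideanLin B' (y (Fin.last s))
      have hsplit : u - u' = Matrix.toEuclideanLin Λ (h - h')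
          + Matrix.toEuclideanLin (Λ - Λ') h'
          + Matrix.toEuclideanLin (B - B') (y (Fin.last s)) := by
        simp only [u, u', map_sub, LinearMap.sub_apply]
        abel
      have hu : ‖u - u'‖ ≤ Λsup * D + frobNorm (Λ - Λ') * S + frobNorm (B - B') * xsup := by
        rw [hsplit]
        refine (norm_add_le _ _).trans ?_
        have t1 : ‖Matrix.toEuclideanLin Λ (h - h') + Matrix.toEuclideanLin (Λ - Λ') h'‖ ≤
            Λsup * D + frobNorm (Λ - Λ') * S := by
          refine (norm_add_le _ _).trans ?_
          gcongr
          · exact (hΛ _).trans (mul_le_mul_of_nonneg_left hprev hΛsup0)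
          · exact (toEuclideanLin_frob_bound _ _).trans (mul_le_mul_of_nonneg_left hh' hfΛ)
        have t2 : ‖Matrix.toEuclideanLin (B - B') (y (Fin.last s))‖ ≤
            frobNorm (B - B') * xsup :=
          (toEuclideanLin_frob_bound _ _).trans (mul_le_mul_of_nonneg_left (hy (Fin.last s)) hfB)
        linarith
      calc ‖rnnHidden σ Λ B (s+1) y - rnnHidden σ Λ' B' (s+1) y‖
          = ‖σ u - σ u'‖ := by rw [rnnHidden, rnnHidden]
        _ ≤ Lσ * ‖u - u'‖ := hσLip _ _
        _ ≤ Lσ * (Λsup * D + frobNorm (Λ - Λ') * S + frobNorm (B - B') * xsup) := by gcongr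
        _ = Lσ * Λsup * D + Lσ * (frobNorm (Λ - Λ') * S + frobNorm (B - B') * xsup) := by ring
        _ = D := hDeq
  refine ⟨hbound Λ B hΛ hB t x hx, ?_, ?_⟩
  · -- output difference bound
    have hd := hdiff t x hx
    have htri : ‖ω (rnnHidden σ Λ B t x) θω - ω (rnnHidden σ Λ' B' t x) θω'‖ ≤
        Lω * ‖θω - θω'‖ + Mω * D := by
      calc ‖ω (rnnHidden σ Λ B t x) θω - ω (rnnHidden σ Λ' B' t x) θω'‖
          ≤ ‖ω (rnnHidden σ Λ B t x) θω - ω (rnnHidden σ Λ B t x) θω'‖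
            + ‖ω (rnnHidden σ Λ B t x) θω' - ω (rnnHidden σ Λ' B' t x) θω'‖ :=
            norm_sub_le_norm_sub_add_norm_sub _ _ _
        _ ≤ Lω * ‖θω - θω'‖ + Mω * ‖rnnHidden σ Λ B t x - rnnHidden σ Λ' B' t x‖ :=
            add_le_add (hωLipParam _ _ _) (hωLipInput _ _ _)
        _ ≤ Lω * ‖θω - θω'‖ + Mω * D := by gcongr
    refine htri.trans ?_
    have hMD : Mω * D = (Mω * Lσ ^ 2 * Bsup * xsup / (1 - Lσ * Λsup) ^ 2) * frobNorm (Λ - Λ')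
        + (Mω * Lσ * xsup / (1 - Lσ * Λsup)) * frobNorm (B - B') := by
      rw [hD, hS]
      field_simp
    linarith [hMD.le, hMD.ge]
  · -- Cauchy-Schwarz step
    set a := Lω
    set b := Mω * Lσ ^ 2 * Bsup * xsup / (1 - Lσ * Λsup) ^ 2
    set c := Mω * Lσ * xsup / (1 - Lσ * Λsup)
    set X := ‖θω - θω'‖
    set Y := frobNorm (Λ - Λ')
    set Z := frobNorm (B - B')
    have := Real.sum_mul_le_sqrt_mul_sqrt Finset.univ ![a, b, c] ![X, Y, Z]
    simpa [Fin.sum_univ_three] using this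
end
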